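/- arXiv:math/0503069 — 8 statements merged into one kernel-verified Lean document; each statement's English description precedes it below -/
import Mathlib

section
/- Let A = {a_1 < a_2 < ... < a_k} be a finite set of real numbers with distinct consecutive differences (i.e., a_{i+1} - a_i = a_{j+1} - a_j implies i = j), and let B be a finite set of real numbers with |B| = ℓ. Then |A + B| ≥ k·√ℓ / 3. -/
open Pointwise

private lemma dcd_arith (k ℓ n T sc bc : ℕ) (r : ℝ)
    (hk : 1 ≤ k) (hr1 : 1 ≤ r) (hrsq : r * r = ℓ)
    (hTle : (T:ℝ) ≤ r) (hT1ge : r ≤ (T:ℝ) + 1)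
    (hln : ℓ ≤ n)
    (hsplit : sc + bc = (k-1) * ℓ)
    (hsc : sc ≤ n * T) (hbc : bc * (T+1) ≤ ℓ * n) :
    (k:ℝ) * r / 3 ≤ n := by
  have hrpos : (0:ℝ) < r := by linarith
  have hk1 : ((k-1:ℕ):ℝ) = (k:ℝ) - 1 := by
    rw [Nat.cast_sub hk]; simp
  have h0 : ((k:ℝ)-1) * ℓ = (sc:ℝ) + bc := by
    rw [← hk1]; exact_mod_cast hsplit.symm
  have h1 : (sc:ℝ) ≤ n * T := by exact_mod_cast hsc
  have h2 : (bc:ℝ) * ((T:ℝ)+1) ≤ (ℓ:ℝ) * n := by exact_mod_cast hbc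
  have hnR : (ℓ:ℝ) ≤ n := by exact_mod_cast hln
  have hbc0 : (0:ℝ) ≤ (bc:ℝ) := Nat.cast_nonneg bc
  have hn0 : (0:ℝ) ≤ (n:ℝ) := Nat.cast_nonneg n
  have hbr : (bc:ℝ) * r ≤ (r*n)*r := by
    calc (bc:ℝ) * r ≤ (bc:ℝ) * ((T:ℝ)+1) := mul_le_mul_of_nonneg_left hT1ge hbc0
      _ ≤ (ℓ:ℝ) * n := h2
      _ = (r*n)*r := by rw [← hrsq]; ring
  have h4 : (bc:ℝ) ≤ r * n := le_of_mul_le_mul_right hbr hrpos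
  have h5 : (n:ℝ)*T ≤ (n:ℝ) * r := mul_le_mul_of_nonneg_left hTle hn0
  have h6 : ((k:ℝ)-1)*ℓ ≤ 2 * ((n:ℝ)*r) := by linarith
  have hrl : r ≤ (ℓ:ℝ) := by nlinarith
  have hrn : r ≤ (n:ℝ) := le_trans hrl hnR
  have h7 : (ℓ:ℝ) ≤ (n:ℝ)*r := by nlinarith
  have h8 : (k:ℝ) * ℓ ≤ 3 * ((n:ℝ)*r) := by nlinarith
  have h9' : ((k:ℝ)*r)*r ≤ (3*(n:ℝ))*r := by
    have e : ((k:ℝ)*r)*r = (k:ℝ)*(ℓ:ℝ) := by rw [← hrsq]; ring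
    rw [e]; linarith
  have h9 := le_of_mul_le_mul_right h9' hrpos
  linarith


/-- Theorem 1 (Solymosi): if A = {a_1 < ... < a_k} has distinct consecutive
differences and |B| = ℓ, then |A + B| ≥ k√ℓ/3. -/
theorem distinct_consecutive_differences_sumset
    (k ℓ : ℕ) (a : ℕ → ℝ)
    (hmono : ∀ i j, i < j → j < k → a i < a j)
    (hdiff : ∀ i j, i + 1 < k → j + 1 < k →
      a (i + 1) - a i = a (j + 1) - a j → i = j)
    (B : Finset ℝ) (hB : B.card = ℓ) :
    (((Finset.image a (Finset.range k)) + B).card : ℝ) ≥ k * Real.sqrt ℓ / 3 := by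
  rcases Nat.eq_zero_or_pos k with hk | hk
  · simp [hk]
  rcases Nat.eq_zero_or_pos ℓ with hl | hl
  · have : B = ∅ := by rwa [hl, Finset.card_eq_zero] at hB
    simp [hl, this]
  set S := Finset.image a (Finset.range k) + B with hS
  set n := S.card with hn
  have hmemS : ∀ i, i < k → ∀ b ∈ B, a i + b ∈ S := by
    intro i hi b hb
    exact Finset.add_mem_add (Finset.mem_image_of_mem a (Finset.mem_range.mpr hi)) hb
  have hln : ℓ ≤ n := by
    rw [← hB]
    apply Finset.card_le_card_of_injOn (fun b => a 0 + b)
    · intro b hb; exact hmemS 0 hk b hb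
    · intro x _ y _ h; exact add_left_cancel h
  set gap : ℕ → ℝ → ℕ := fun i b =>
    (S.filter (fun s => a i + b < s ∧ s ≤ a (i+1) + b)).card with hgap
  have hgap1 : ∀ i, i + 1 < k → ∀ b ∈ B, 1 ≤ gap i b := by
    intro i hi b hb
    rw [hgap]
    refine Finset.card_pos.mpr ⟨a (i+1) + b, ?_⟩
    simp only [Finset.mem_filter]
    exact ⟨hmemS (i+1) hi b hb,
      by have := hmono i (i+1) (Nat.lt_succ_self i) hi; linarith, le_refl _⟩
  set r := Real.sqrt ℓ with hr
  have hr1 : 1 ≤ r := by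
    rw [hr]; rw [show (1:ℝ) = Real.sqrt 1 by simp]
    exact Real.sqrt_le_sqrt (by exact_mod_cast hl)
  set T := Nat.ceil r - 1 with hT
  have hceil : 1 ≤ Nat.ceil r := Nat.one_le_ceil_iff.mpr (by linarith)
  have hT1 : T + 1 = Nat.ceil r := by omega
  have hTle : (T : ℝ) ≤ r := by
    have h1 : ((Nat.ceil r : ℕ) : ℝ) < r + 1 := Nat.ceil_lt_add_one (by linarith)
    have : (T : ℝ) = (Nat.ceil r : ℝ) - 1 := by
      rw [hT, Nat.cast_sub hceil]; simp
    linarith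
  have hT1ge : r ≤ ((T : ℝ) + 1) := by
    have := Nat.le_ceil r
    rw [← hT1] at this; push_cast at this; linarith
  set P := (Finset.range (k-1)) ×ˢ B with hP
  have hPcard : P.card = (k-1) * ℓ := by rw [hP, Finset.card_product, Finset.card_range, hB]
  set Small := P.filter (fun p => gap p.1 p.2 ≤ T) with hSmall
  set Big := P.filter (fun p => ¬ gap p.1 p.2 ≤ T) with hBig
  have hsplit : Small.card + Big.card = (k-1) * ℓ := by
    rw [hSmall, hBig, Finset.card_filter_add_card_filter_not, hPcard]
  have hkey : ∀ i ∈ Finset.range (k-1), ∀ j ∈ Finset.range (k-1), ∀ b ∈ B, ∀ b' ∈ B,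
      a i + b = a j + b' → gap i b = gap j b' → a (i+1) + b ≤ a (j+1) + b' →
      a (j+1) + b' ≤ a (i+1) + b := by
    intro i hi j hj b hb b' hb' hx hg hle
    have hjk : j + 1 < k := by have := Finset.mem_range.mp hj; omega
    have hsub : S.filter (fun s => a i + b < s ∧ s ≤ a (i+1) + b) ⊆
        S.filter (fun s => a j + b' < s ∧ s ≤ a (j+1) + b') := by
      intro s hs
      simp only [Finset.mem_filter] at hs ⊢
      exact ⟨hs.1, by rw [← hx]; exact hs.2.1, le_trans hs.2.2 hle⟩
    have heq : S.filter (fun s => a i + b < s ∧ s ≤ a (i+1) + b) =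
        S.filter (fun s => a j + b' < s ∧ s ≤ a (j+1) + b') := by
      apply Finset.eq_of_subset_of_card_le hsub
      exact le_of_eq hg.symm
    have hmem : a (j+1) + b' ∈ S.filter (fun s => a j + b' < s ∧ s ≤ a (j+1) + b') := by
      simp only [Finset.mem_filter]
      exact ⟨hmemS (j+1) hjk b' hb',
        by have := hmono j (j+1) (Nat.lt_succ_self j) hjk; linarith, le_refl _⟩
    rw [← heq] at hmem
    simp only [Finset.mem_filter] at hmem
    exact hmem.2.2
  have hinj : ∀ i ∈ Finset.range (k-1), ∀ j ∈ Finset.range (k-1), ∀ b ∈ B, ∀ b' ∈ B,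
      a i + b = a j + b' → gap i b = gap j b' → i = j ∧ b = b' := by
    intro i hi j hj b hb b' hb' hx hg
    have hik : i + 1 < k := by have := Finset.mem_range.mp hi; omega
    have hjk : j + 1 < k := by have := Finset.mem_range.mp hj; omega
    have htop : a (i+1) + b = a (j+1) + b' := by
      rcases le_total (a (i+1) + b) (a (j+1) + b') with h | h
      · exact le_antisymm h (hkey i hi j hj b hb b' hb' hx hg h)
      · exact (le_antisymm h (hkey j hj i hi b' hb' b hb hx.symm hg.symm h)).symm
    have hij : i = j := hdiff i j hik hjk (by linarith)
    subst hij
    exact ⟨rfl, by linarith⟩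
  have hSmallCard : Small.card ≤ n * T := by
    have := Finset.card_le_card_of_injOn
      (fun p : ℕ × ℝ => (a p.1 + p.2, gap p.1 p.2))
      (s := Small) (t := S ×ˢ Finset.Icc 1 T) ?_ ?_
    · rwa [Finset.card_product, Nat.card_Icc] at this
    · intro p hp
      rw [Finset.mem_coe, hSmall, Finset.mem_filter, hP, Finset.mem_product] at hp
      obtain ⟨⟨hp1, hp2⟩, hp3⟩ := hp
      have hik : p.1 + 1 < k := by have := Finset.mem_range.mp hp1; omega
      rw [Finset.mem_coe, Finset.mem_product, Finset.mem_Icc]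
      exact ⟨hmemS p.1 (by omega) p.2 hp2, hgap1 p.1 hik p.2 hp2, hp3⟩
    · intro p hp q hq h
      simp only [Finset.mem_coe, hSmall, Finset.mem_filter, hP,
        Finset.mem_product] at hp hq
      simp only [Prod.mk.injEq] at h
      have := hinj p.1 hp.1.1 q.1 hq.1.1 p.2 hp.1.2 q.2 hq.1.2 h.1 h.2
      exact Prod.ext this.1 this.2
  have hBigCard : Big.card * (T + 1) ≤ ℓ * n := by
    have hfiber : Big.card = ∑ b ∈ B, (Big.filter (fun p => p.2 = b)).card := by
      apply Finset.card_eq_sum_card_fiberwise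
      intro p hp
      rw [Finset.mem_coe, hBig, Finset.mem_filter, hP, Finset.mem_product] at hp
      exact hp.1.2
    have hper : ∀ b ∈ B, (Big.filter (fun p => p.2 = b)).card * (T+1) ≤ n := by
      intro b hb
      have hc1 : (Big.filter (fun p => p.2 = b)).card ≤
          ((Finset.range (k-1)).filter (fun i => T < gap i b)).card := by
        apply Finset.card_le_card_of_injOn (fun p => p.1)
        · intro p hp
          rw [Finset.mem_coe, Finset.mem_filter, hBig, Finset.mem_filter, hP, Finset.mem_product] at hp
          rw [Finset.mem_coe, Finset.mem_filter]
          refine ⟨hp.1.1.1, ?_⟩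
          have h1 := hp.1.2; have hpb := hp.2
          rw [hpb] at h1; show T < gap p.1 b; omega
        · intro p hp q hq h
          simp only [Finset.mem_coe, Finset.mem_filter] at hp hq
          exact Prod.ext h (hp.2.trans hq.2.symm)
      have hsum : ∑ i ∈ Finset.range (k-1), gap i b ≤ n := by
        have hdisj : ∀ i ∈ Finset.range (k-1), ∀ j ∈ Finset.range (k-1), i ≠ j →
            Disjoint (S.filter (fun s => a i + b < s ∧ s ≤ a (i+1) + b))
              (S.filter (fun s => a j + b < s ∧ s ≤ a (j+1) + b)) := by
          intro i hi j hj hij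
          wlog hlt : i < j generalizing i j
          · exact (this j hj i hi hij.symm (by omega)).symm
          rw [Finset.disjoint_left]
          intro s hs hs'
          simp only [Finset.mem_filter] at hs hs'
          have hjk : j + 1 < k := by have := Finset.mem_range.mp hj; omega
          have : a (i+1) ≤ a j := by
            rcases Nat.lt_or_ge (i+1) j with h | h
            · exact le_of_lt (hmono (i+1) j h (by omega))
            · have hej : i + 1 = j := by omega
              rw [hej]
          linarith [hs.2.2, hs'.2.1]
        calc ∑ i ∈ Finset.range (k-1), gap i b
            = ((Finset.range (k-1)).biUnion
                (fun i => S.filter (fun s => a i + b < s ∧ s ≤ a (i+1) + b))).card := by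
              rw [Finset.card_biUnion hdisj]
          _ ≤ n := by
              apply Finset.card_le_card
              intro s hs
              rw [Finset.mem_biUnion] at hs
              obtain ⟨i, _, hi⟩ := hs
              exact (Finset.mem_filter.mp hi).1
      have hc2 : ((Finset.range (k-1)).filter (fun i => T < gap i b)).card * (T+1) ≤
          ∑ i ∈ Finset.range (k-1), gap i b := by
        calc ((Finset.range (k-1)).filter (fun i => T < gap i b)).card * (T+1)
            = ∑ _i ∈ (Finset.range (k-1)).filter (fun i => T < gap i b), (T+1) := by
              rw [Finset.sum_const, smul_eq_mul]
          _ ≤ ∑ i ∈ (Finset.range (k-1)).filter (fun i => T < gap i b), gap i b := by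
              apply Finset.sum_le_sum
              intro i hi
              have := (Finset.mem_filter.mp hi).2; omega
          _ ≤ ∑ i ∈ Finset.range (k-1), gap i b :=
              Finset.sum_le_sum_of_subset (Finset.filter_subset _ _)
      calc (Big.filter (fun p => p.2 = b)).card * (T+1)
          ≤ ((Finset.range (k-1)).filter (fun i => T < gap i b)).card * (T+1) :=
            Nat.mul_le_mul_right _ hc1
        _ ≤ n := le_trans hc2 hsum
    calc Big.card * (T+1) = ∑ b ∈ B, (Big.filter (fun p => p.2 = b)).card * (T+1) := by
          rw [hfiber, Finset.sum_mul]
      _ ≤ ∑ b ∈ B, n := Finset.sum_le_sum hper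
      _ = ℓ * n := by rw [Finset.sum_const, smul_eq_mul, hB]
  have hrsq : r * r = (ℓ:ℝ) := Real.mul_self_sqrt (by positivity)
  exact dcd_arith k ℓ n T Small.card Big.card r hk hr1 hrsq hTle hT1ge hln hsplit
    hSmallCard hBigCard
end

section
/- Let m, k be positive integers with k ≥ 3, let t = ⌊k/2⌋, and suppose m = q·t + r with 0 ≤ r ≤ t - 1. If C is a set of size m partitioned into t blocks, r of size q+1 and t - r of size q, then the total number of unordered pairs lying within blocks, ∑_u C(|C_u|, 2), is at most (k/4)·(2m/(k-1) + 1)². -/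
set_option maxHeartbeats 1600000

/-- With t = ⌊k/2⌋ and m = q·t + r, 0 ≤ r ≤ t - 1, splitting a set of size m
into r blocks of size q+1 and t - r blocks of size q, the total number of pairs
inside blocks satisfies ∑_u C(|C_u|, 2) ≤ (k/4)·(2m/(k-1) + 1)². -/
theorem pairs_within_blocks_upper_bound
    (m k q r t : ℕ) (hk : 3 ≤ k) (hm : 0 < m)
    (ht : t = k / 2) (hqr : m = q * t + r) (hr : r ≤ t - 1) :
    (r * Nat.choose (q + 1) 2 + (t - r) * Nat.choose q 2 : ℝ)
      ≤ (k : ℝ) / 4 * (2 * m / ((k : ℝ) - 1) + 1) ^ 2 := by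
  have ht1 : 1 ≤ t := by
    subst ht; omega
  have hrt : r ≤ t := by omega
  have hrt1 : r + 1 ≤ t := by omega
  have h2t : 2 * t ≤ k := by omega
  have hk2t : k ≤ 2 * t + 1 := by omega
  have hkR : (3:ℝ) ≤ (k:ℝ) := by exact_mod_cast hk
  have hk1 : (0:ℝ) < (k:ℝ) - 1 := by linarith
  rcases Nat.eq_zero_or_pos q with hq | hq
  · subst hq
    simp only [Nat.choose, zero_add]
    norm_num
    positivity
  · -- cast facts
    have hq1 : (1:ℝ) ≤ (q:ℝ) := by exact_mod_cast hq
    have hmR : (m:ℝ) = q * t + r := by exact_mod_cast hqr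
    have h2tR : 2 * (t:ℝ) ≤ k := by exact_mod_cast h2t
    have hk2tR : (k:ℝ) ≤ 2 * t + 1 := by exact_mod_cast hk2t
    have hrt1R : (r:ℝ) + 1 ≤ t := by exact_mod_cast hrt1
    have hr0 : (0:ℝ) ≤ r := by positivity
    have ht0 : (1:ℝ) ≤ (t:ℝ) := by exact_mod_cast ht1
    rw [Nat.cast_choose_two, Nat.cast_choose_two]
    have h1 : (2 * (m:ℝ) / ((k:ℝ)-1) + 1) = (2*m + ((k:ℝ)-1))/((k:ℝ)-1) := by
      field_simp
    rw [h1, div_pow, show (k:ℝ)/4 * ((2*(m:ℝ)+((k:ℝ)-1))^2/((k:ℝ)-1)^2)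
        = ((k:ℝ)*(2*(m:ℝ)+((k:ℝ)-1))^2/4)/((k:ℝ)-1)^2 from by ring,
      le_div_iff₀ (by positivity : (0:ℝ) < ((k:ℝ)-1)^2)]
    push_cast
    -- key chain
    have key : 2*(q:ℝ)*((q:ℝ)*t+2*r-t)*((k:ℝ)-1)^2 ≤ (k:ℝ)*(2*(q:ℝ)*t+2*r+(k:ℝ)-1)^2 := by
      have hq0 : (0:ℝ) ≤ (q:ℝ) := by positivity
      have ht0' : (0:ℝ) ≤ (t:ℝ) := by linarith
      have hA : (0:ℝ) ≤ (q:ℝ)*((q:ℝ)*t+2*r-t) := by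
        nlinarith [mul_nonneg (mul_nonneg hq0 (by linarith : (0:ℝ) ≤ (q:ℝ)-1)) ht0',
          mul_nonneg hq0 hr0]
      have h2 : ((k:ℝ)-1)^2 ≤ 4*(t:ℝ)^2 := by
        nlinarith [mul_le_mul h2tR h2tR (by linarith : (0:ℝ) ≤ 2*(t:ℝ)) (by linarith : (0:ℝ) ≤ (k:ℝ))]
      have step1 : 2*(q:ℝ)*((q:ℝ)*t+2*r-t)*((k:ℝ)-1)^2 ≤ 2*(q:ℝ)*((q:ℝ)*t+2*r-t)*(4*(t:ℝ)^2) := by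
        have h := mul_le_mul_of_nonneg_left h2 (by linarith : (0:ℝ) ≤ 2*((q:ℝ)*((q:ℝ)*t+2*r-t)))
        linarith [h]
      have core : 4*(q:ℝ)*t*((q:ℝ)*t+2*r-t) ≤ (2*(q:ℝ)*t+2*r+2*t-1)^2 := by
        nlinarith [sq_nonneg (2*(r:ℝ)+2*t-1),
          mul_nonneg (mul_nonneg hq0 ht0') (by linarith : (0:ℝ) ≤ 3*(t:ℝ)-1)]
      have step2 : 2*(q:ℝ)*((q:ℝ)*t+2*r-t)*(4*(t:ℝ)^2) ≤ 2*(t:ℝ)*(2*(q:ℝ)*t+2*r+2*t-1)^2 := by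
        have h := mul_le_mul_of_nonneg_left core (by linarith : (0:ℝ) ≤ 2*(t:ℝ))
        linarith [h]
      have hB0 : (0:ℝ) ≤ 2*(q:ℝ)*t+2*r+2*t-1 := by nlinarith [mul_nonneg hq0 ht0']
      have hBle : 2*(q:ℝ)*t+2*r+2*t-1 ≤ 2*(q:ℝ)*t+2*r+(k:ℝ)-1 := by linarith
      have hsq : (2*(q:ℝ)*t+2*r+2*t-1)^2 ≤ (2*(q:ℝ)*t+2*r+(k:ℝ)-1)^2 :=
        pow_le_pow_left₀ hB0 hBle 2
      have step3 : 2*(t:ℝ)*(2*(q:ℝ)*t+2*r+2*t-1)^2 ≤ (k:ℝ)*(2*(q:ℝ)*t+2*r+(k:ℝ)-1)^2 := by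
        have h := mul_le_mul h2tR hsq (by positivity) (by linarith : (0:ℝ) ≤ (k:ℝ))
        linarith [h]
      linarith
    rw [hmR]
    linarith [key]
end

section
/- Let A = {a_1 < ... < a_k} be a convex set of real numbers (consecutive differences strictly increasing), and let B be any finite set of reals with |B| = ℓ ≥ 1. Then |A + B| ≥ k·√ℓ / 3. In particular, if ℓ = k then |A + B| ≥ k^{3/2}/3. -/
open Pointwise

private lemma diff_mono_aux (k : ℕ) (a : ℕ → ℝ)
    (hconv : ∀ i, i + 2 < k → a (i + 1) - a i < a (i + 2) - a (i + 1)) :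
    ∀ j i, i < j → j + 1 < k → a (i + 1) - a i < a (j + 1) - a j := by
  intro j
  induction j with
  | zero => intro i h _; exact absurd h (Nat.not_lt_zero i)
  | succ n ih =>
    intro i hij hk
    have hn : a (n + 1) - a n < a (n + 2) - a (n + 1) := hconv n (by omega)
    rcases Nat.lt_or_ge i n with h | h
    · exact lt_trans (ih i h (by omega)) hn
    · have : i = n := by omega
      subst this; exact hn

/-- (Elekes–Nathanson–Ruzsa) If A = {a_1 < ... < a_k} is convex and |B| = ℓ ≥ 1,
then |A + B| ≥ k√ℓ/3; in particular if ℓ = k then |A + B| ≥ k^{3/2}/3. -/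
theorem convex_sumset_lower_bound
    (k ℓ : ℕ) (a : ℕ → ℝ)
    (hmono : ∀ i j, i < j → j < k → a i < a j)
    (hconv : ∀ i, i + 2 < k → a (i + 1) - a i < a (i + 2) - a (i + 1))
    (B : Finset ℝ) (hB : B.card = ℓ) (hℓ : 1 ≤ ℓ) :
    (((Finset.image a (Finset.range k)) + B).card : ℝ) ≥ k * Real.sqrt ℓ / 3 ∧
      (ℓ = k →
        (((Finset.image a (Finset.range k)) + B).card : ℝ)
          ≥ (k : ℝ) ^ ((3 : ℝ) / 2) / 3) := by
  classical
  set S := Finset.image a (Finset.range k) + B with hS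
  set N := S.card with hN
  have hmemS : ∀ i, i < k → ∀ b ∈ B, a i + b ∈ S := by
    intro i hi b hb
    exact Finset.add_mem_add (Finset.mem_image_of_mem a (Finset.mem_range.mpr hi)) hb
  have hℓ' : (1:ℝ) ≤ (ℓ:ℝ) := by exact_mod_cast hℓ
  have hsqrtℓ : Real.sqrt ℓ ≤ (ℓ:ℝ) := by
    have h1 : ((ℓ:ℝ)) ≤ (ℓ:ℝ)^2 := by nlinarith
    calc Real.sqrt ℓ ≤ Real.sqrt ((ℓ:ℝ)^2) := Real.sqrt_le_sqrt h1
      _ = (ℓ:ℝ) := Real.sqrt_sq (by positivity)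
  have htriv : 1 ≤ k → ℓ ≤ N := by
    intro hk
    rw [← hB, hN]
    apply Finset.card_le_card_of_injOn (fun b => a 0 + b)
    · intro b hb; exact hmemS 0 (by omega) b hb
    · intro x _ y _ h; exact add_left_cancel h
  clear_value S
  clear_value N
  -- Main counting inequality for k ≥ 2
  have hmain : 2 ≤ k → ((k:ℝ) - 1)^2 * (ℓ:ℝ) ≤ 4 * (N:ℝ)^2 := by
    intro hk
    set g : ℕ × ℝ → ℕ :=
      fun p => (S.filter (fun s => a p.1 + p.2 < s ∧ s ≤ a (p.1+1) + p.2)).card with hg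
    set F := (Finset.range (k-1)) ×ˢ B with hF
    have hFcard : F.card = (k-1) * ℓ := by
      rw [hF, Finset.card_product, Finset.card_range, hB]
    -- every g p ≥ 1 on F
    have hg1 : ∀ p ∈ F, 1 ≤ g p := by
      rintro ⟨i, b⟩ hp
      rw [hF, Finset.mem_product, Finset.mem_range] at hp
      obtain ⟨hi, hb⟩ := hp
      have h1 : a (i+1) + b ∈ S.filter (fun s => a i + b < s ∧ s ≤ a (i+1) + b) := by
        rw [Finset.mem_filter]
        refine ⟨hmemS (i+1) (by omega) b hb, ?_, le_refl _⟩
        have := hmono i (i+1) (by omega) (by omega)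
        linarith
      exact Finset.card_pos.mpr ⟨_, h1⟩
    -- row sums bounded by N
    have hrow : ∀ b ∈ B, ∑ i ∈ Finset.range (k-1), g (i, b) ≤ N := by
      intro b hb
      have hdisj : ∀ i ∈ Finset.range (k-1), ∀ j ∈ Finset.range (k-1), i ≠ j →
          Disjoint (S.filter (fun s => a i + b < s ∧ s ≤ a (i+1) + b))
            (S.filter (fun s => a j + b < s ∧ s ≤ a (j+1) + b)) := by
      -- wlog helper
        have key : ∀ i j : ℕ, i < j → j < k - 1 →
            Disjoint (S.filter (fun s => a i + b < s ∧ s ≤ a (i+1) + b))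
              (S.filter (fun s => a j + b < s ∧ s ≤ a (j+1) + b)) := by
          intro i j hij hj
          rw [Finset.disjoint_left]
          intro s hs1 hs2
          rw [Finset.mem_filter] at hs1 hs2
          have h1 : a (i+1) ≤ a j := by
            rcases Nat.lt_or_ge (i+1) j with h | h
            · exact (hmono (i+1) j h (by omega)).le
            · have : i + 1 = j := by omega
              rw [this]
          linarith [hs1.2.2, hs2.2.1]
        intro i hi j hj hij
        rw [Finset.mem_range] at hi hj
        rcases Nat.lt_or_ge i j with h | h
        · exact key i j h hj
        · exact (key j i (by omega) hi).symm
      calc ∑ i ∈ Finset.range (k-1), g (i, b)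
          = ((Finset.range (k-1)).biUnion
              (fun i => S.filter (fun s => a i + b < s ∧ s ≤ a (i+1) + b))).card :=
            (Finset.card_biUnion hdisj).symm
        _ ≤ N := by
            rw [hN]
            exact Finset.card_le_card
              (Finset.biUnion_subset.mpr fun i _ => Finset.filter_subset _ _)
    -- total sum bounded by ℓ N
    have hsum_le : ∑ p ∈ F, g p ≤ ℓ * N := by
      rw [hF, Finset.sum_product_right]
      calc ∑ b ∈ B, ∑ i ∈ Finset.range (k-1), g (i, b)
          ≤ ∑ _b ∈ B, N := Finset.sum_le_sum hrow
        _ = ℓ * N := by rw [Finset.sum_const, hB, smul_eq_mul]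
    -- injectivity of p ↦ (a p.1 + p.2, g p)
    have hinj : Set.InjOn (fun p : ℕ × ℝ => (a p.1 + p.2, g p)) ↑F := by
      have key : ∀ i b j c, (i, b) ∈ F → (j, c) ∈ F →
          a i + b = a j + c → a (i+1) + b < a (j+1) + c →
          g (i, b) < g (j, c) := by
        intro i b j c hp hq he hlt
        rw [hF, Finset.mem_product, Finset.mem_range] at hp hq
        have hsub : S.filter (fun s => a i + b < s ∧ s ≤ a (i+1) + b) ⊂
            S.filter (fun s => a j + c < s ∧ s ≤ a (j+1) + c) := by
          constructor
          · intro s hs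
            rw [Finset.mem_filter] at hs ⊢
            exact ⟨hs.1, by linarith [hs.2.1, hs.2.2], by linarith [hs.2.2]⟩
          · intro hcon
            have h1 : a (j+1) + c ∈ S.filter (fun s => a j + c < s ∧ s ≤ a (j+1) + c) := by
              rw [Finset.mem_filter]
              refine ⟨hmemS (j+1) (by omega) c hq.2, ?_, le_refl _⟩
              have := hmono j (j+1) (by omega) (by omega)
              linarith
            have h2 := hcon h1
            rw [Finset.mem_filter] at h2
            linarith [h2.2.2]
        exact Finset.card_lt_card hsub
      rintro ⟨i, b⟩ hp ⟨j, c⟩ hq heq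
      simp only [Finset.mem_coe] at hp hq
      simp only [Prod.mk.injEq] at heq
      obtain ⟨he1, he2⟩ := heq
      have hend : a (i+1) + b = a (j+1) + c := by
        rcases lt_trichotomy (a (i+1) + b) (a (j+1) + c) with h | h | h
        · exact absurd he2 (Nat.ne_of_lt (key i b j c hp hq he1 h))
        · exact h
        · exact absurd he2.symm (Nat.ne_of_lt (key j c i b hq hp he1.symm h))
      have hij : i = j := by
        rw [hF, Finset.mem_product, Finset.mem_range] at hp hq
        have hd : a (i+1) - a i = a (j+1) - a j := by linarith
        rcases lt_trichotomy i j with h | h | h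
        · exact absurd hd (ne_of_lt (diff_mono_aux k a hconv j i h (by omega)))
        · exact h
        · exact absurd hd.symm (ne_of_lt (diff_mono_aux k a hconv i j h (by omega)))
      subst hij
      have hbc : b = c := by linarith
      rw [hbc]
    -- small-value count
    have hsmall : ∀ m : ℕ, (F.filter (fun p => g p ≤ m)).card ≤ N * m := by
      intro m
      have h1 : (F.filter (fun p => g p ≤ m)).card ≤ (S ×ˢ Finset.Icc 1 m).card := by
        apply Finset.card_le_card_of_injOn (fun p => (a p.1 + p.2, g p))
        · intro p hp
          rw [Finset.mem_coe, Finset.mem_filter] at hp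
          obtain ⟨hpF, hpm⟩ := hp
          have hpF' := hpF
          rw [hF, Finset.mem_product, Finset.mem_range] at hpF'
          rw [Finset.mem_coe, Finset.mem_product]
          exact ⟨hmemS p.1 (by omega) p.2 hpF'.2, Finset.mem_Icc.mpr ⟨hg1 p hpF, hpm⟩⟩
        · refine hinj.mono ?_
          intro x hx
          simp only [Finset.coe_filter, Set.mem_setOf_eq] at hx
          exact hx.1
      rw [Finset.card_product, Nat.card_Icc, ← hN] at h1
      simpa using h1
    -- big-value sum lower bound
    have hbig : ∀ m : ℕ, (m+1) * (F.filter (fun p => m < g p)).card ≤ ∑ p ∈ F, g p := by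
      intro m
      calc (m+1) * (F.filter (fun p => m < g p)).card
          = ∑ _p ∈ F.filter (fun p => m < g p), (m+1) := by
            rw [Finset.sum_const, smul_eq_mul, mul_comm]
        _ ≤ ∑ p ∈ F.filter (fun p => m < g p), g p := by
            apply Finset.sum_le_sum
            intro p hp
            rw [Finset.mem_filter] at hp
            omega
        _ ≤ ∑ p ∈ F, g p := Finset.sum_le_sum_of_subset (Finset.filter_subset _ _)
    -- N ≥ 1
    have hN1 : 1 ≤ N := le_trans hℓ (htriv (by omega))
    -- the integer crunch
    set T := (k-1) * ℓ with hT
    set q := T / (2*N) with hq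
    have hmod : 2*N*q + T % (2*N) = T := Nat.div_add_mod T (2*N)
    have hrlt : T % (2*N) < 2*N := Nat.mod_lt T (by omega)
    set CS := (F.filter (fun p => g p ≤ q)).card with hCS
    set CB := (F.filter (fun p => q < g p)).card with hCB
    have hsplit : CS + CB = T := by
      have h := Finset.card_filter_add_card_filter_not (s := F) (p := fun p => g p ≤ q)
      simpa [not_le, hFcard, hT] using h
    have hCSle : CS ≤ N * q := hsmall q
    have hCBle : (q+1) * CB ≤ ℓ * N := le_trans (hbig q) hsum_le
    clear_value T q CS CB
    -- conclude in ℤ then ℝ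
    have hZ : ((k:ℤ) - 1)^2 * (ℓ:ℤ) ≤ 4 * (N:ℤ)^2 := by
      have e0 : (0:ℤ) ≤ ((T % (2*N) : ℕ) : ℤ) := Int.natCast_nonneg _
      have e1 : ((T:ℤ)) = 2*N*q + ((T % (2*N) : ℕ) : ℤ) := by exact_mod_cast hmod.symm
      have e2 : ((T % (2*N) : ℕ) : ℤ) < 2*N := by exact_mod_cast hrlt
      have e3 : ((CS:ℤ)) + CB = T := by exact_mod_cast hsplit
      have e4 : ((CS:ℤ)) ≤ N * q := by exact_mod_cast hCSle
      have e5 : ((q:ℤ)+1) * CB ≤ ℓ * N := by exact_mod_cast hCBle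
      have e6 : (T:ℤ) = ((k:ℤ)-1) * ℓ := by
        rw [hT]; push_cast [Nat.cast_sub (by omega : 1 ≤ k)]; ring
      have e7 : (0:ℤ) ≤ (q:ℤ) := Int.natCast_nonneg _
      have e8 : (0:ℤ) ≤ (N:ℤ) := Int.natCast_nonneg _
      have e9 : (0:ℤ) ≤ (CB:ℤ) := Int.natCast_nonneg _
      have e10 : (1:ℤ) ≤ (ℓ:ℤ) := by exact_mod_cast hℓ
      -- T^2 ≤ 4N(q+1)(T - Nq)
      set r : ℤ := ((T % (2*N) : ℕ) : ℤ) with hr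
      have key : (T:ℤ)^2 ≤ 4*N*(((q:ℤ)+1)*((T:ℤ) - N*q)) := by
        have hpos1 : (0:ℤ) ≤ r * (4*(N:ℤ) - r) :=
          mul_nonneg e0 (by linarith : (0:ℤ) ≤ 4*(N:ℤ) - r)
        have hpos2 : (0:ℤ) ≤ (N:ℤ)^2 * q := mul_nonneg (by positivity) e7
        have expand : 4*(N:ℤ)*(((q:ℤ)+1)*((2*(N:ℤ)*q + r) - N*q))
            = (2*(N:ℤ)*q + r)^2 + 4*(N:ℤ)^2*q + r*(4*(N:ℤ) - r) := by ring
        rw [e1]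
        linarith [expand]
      have key2 : (T:ℤ)^2 ≤ 4*N*(ℓ*N) := by
        have h1 : (T:ℤ) - N*q ≤ CB := by linarith
        have h2 : ((q:ℤ)+1)*((T:ℤ) - N*q) ≤ ((q:ℤ)+1)*CB :=
          mul_le_mul_of_nonneg_left h1 (by linarith)
        have h3 : 4*(N:ℤ)*(((q:ℤ)+1)*((T:ℤ) - N*q)) ≤ 4*N*(ℓ*N) :=
          mul_le_mul_of_nonneg_left (le_trans h2 e5) (by linarith)
        linarith
      rw [e6] at key2
      have hl0 : (0:ℤ) < (ℓ:ℤ) := by linarith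
      have h5 : (((k:ℤ)-1)^2 * (ℓ:ℤ)) * ℓ ≤ (4 * (N:ℤ)^2) * ℓ := by
        have hre : ((((k:ℤ)-1) * ℓ))^2 = (((k:ℤ)-1)^2 * (ℓ:ℤ)) * ℓ := by ring
        have hre2 : 4*(N:ℤ)*((ℓ:ℤ)*N) = (4 * (N:ℤ)^2) * ℓ := by ring
        rw [hre, hre2] at key2
        exact key2
      exact le_of_mul_le_mul_right h5 hl0
    have := hZ
    have hcast : (((k:ℤ) - 1 : ℤ) : ℝ)^2 * ((ℓ:ℤ):ℝ) ≤ 4 * (((N:ℤ)):ℝ)^2 := by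
      exact_mod_cast this
    push_cast at hcast
    exact hcast
  -- Part 1
  have hpart1 : ((N:ℝ)) ≥ k * Real.sqrt ℓ / 3 := by
    rcases Nat.lt_or_ge k 3 with hk3 | hk3
    · rcases Nat.eq_zero_or_pos k with hk0 | hk1
      · subst hk0
        simp only [Nat.cast_zero, zero_mul, zero_div]
        positivity
      · have h1 : (ℓ:ℝ) ≤ N := by exact_mod_cast htriv hk1
        have h2 : (k:ℝ) ≤ 3 := by exact_mod_cast hk3.le
        nlinarith [Real.sqrt_nonneg (ℓ:ℝ)]
    · have hreal := hmain (by omega)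
      have hk1 : (3:ℝ) ≤ (k:ℝ) := by exact_mod_cast hk3
      have hNnn : (0:ℝ) ≤ (N:ℝ) := by positivity
      have h2N : ((k:ℝ)-1) * Real.sqrt ℓ ≤ 2*N := by
        have h0 : (0:ℝ) ≤ (k:ℝ) - 1 := by linarith
        have h1 : ((k:ℝ)-1)^2 * (ℓ:ℝ) ≤ (2*(N:ℝ))^2 := by nlinarith
        have h2 := Real.sqrt_le_sqrt h1
        rw [Real.sqrt_mul (sq_nonneg _), Real.sqrt_sq h0,
          Real.sqrt_sq (by linarith : (0:ℝ) ≤ 2*(N:ℝ))] at h2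
        exact h2
      nlinarith [mul_nonneg (Real.sqrt_nonneg (ℓ:ℝ)) (by linarith : (0:ℝ) ≤ (k:ℝ) - 3)]
  refine ⟨hpart1, ?_⟩
  intro hlk
  subst hlk
  have hk1 : (0:ℝ) < (ℓ:ℝ) := by positivity
  have hexp : ((ℓ:ℝ)) ^ ((3:ℝ)/2) = (ℓ:ℝ) * Real.sqrt ℓ := by
    rw [show (3:ℝ)/2 = 1 + 1/2 by norm_num, Real.rpow_add hk1, Real.rpow_one,
      Real.sqrt_eq_rpow]
  rw [hexp]
  exact hpart1
end

section
/- Let A = {a_1 < ... < a_k} and A' = {a'_1 < ... < a'_k} be finite sets of reals of the same cardinality k, with consecutive differences d_i = a_{i+1} - a_i and d'_i = a'_{i+1} - a'_i. Suppose there is a bijection σ of {1, ..., k-1} such that the ordered pairs (d_i, d'_{σ(i)}) are pairwise distinct. Let B, B' be nonempty finite sets of reals with |B| = ℓ, |B'| = ℓ'. Then there is an absolute constant c > 0 such that |A + B| · |A' + B'| ≥ c·(k³·ℓ·ℓ')^{1/2}. -/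
open Pointwise

private noncomputable def scount (S : Finset ℝ) (x y : ℝ) : ℕ :=
  (S.filter (fun z => x < z ∧ z ≤ y)).card

private lemma scount_pos {S : Finset ℝ} {x u : ℝ} (hu : u ∈ S) (hxu : x < u) :
    1 ≤ scount S x u :=
  Finset.card_pos.2 ⟨u, Finset.mem_filter.2 ⟨hu, hxu, le_refl u⟩⟩

private lemma upper_eq_of_scount_eq {S : Finset ℝ} {x u v : ℝ}
    (hu : u ∈ S) (hv : v ∈ S) (hxu : x < u) (hxv : x < v)
    (hc : scount S x u = scount S x v) : u = v := by
  unfold scount at hc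
  rcases le_total u v with h | h
  · have hsub : S.filter (fun z => x < z ∧ z ≤ u) ⊆ S.filter (fun z => x < z ∧ z ≤ v) := by
      intro z hz
      simp only [Finset.mem_filter] at hz ⊢
      exact ⟨hz.1, hz.2.1, hz.2.2.trans h⟩
    have heq := Finset.eq_of_subset_of_card_le hsub hc.ge
    have hvmem : v ∈ S.filter (fun z => x < z ∧ z ≤ u) := by
      rw [heq]; exact Finset.mem_filter.2 ⟨hv, hxv, le_refl v⟩
    have h2 := (Finset.mem_filter.1 hvmem).2.2
    linarith
  · have hsub : S.filter (fun z => x < z ∧ z ≤ v) ⊆ S.filter (fun z => x < z ∧ z ≤ u) := by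
      intro z hz
      simp only [Finset.mem_filter] at hz ⊢
      exact ⟨hz.1, hz.2.1, hz.2.2.trans h⟩
    have heq := Finset.eq_of_subset_of_card_le hsub hc.le
    have humem : u ∈ S.filter (fun z => x < z ∧ z ≤ v) := by
      rw [heq]; exact Finset.mem_filter.2 ⟨hu, hxu, le_refl u⟩
    have h2 := (Finset.mem_filter.1 humem).2.2
    linarith

private lemma sum_scount_le (S : Finset ℝ) (f : ℕ → ℝ) (K : ℕ)
    (hf : ∀ i j, i < j → j ≤ K → f i ≤ f j) :
    ∑ i ∈ Finset.range K, scount S (f i) (f (i + 1)) ≤ S.card := by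
  classical
  unfold scount
  rw [← Finset.card_biUnion]
  · exact Finset.card_le_card (Finset.biUnion_subset.2 fun i _ => Finset.filter_subset _ _)
  · intro i hi j hj hij
    rw [Function.onFun, Finset.disjoint_left]
    intro z hz1 hz2
    simp only [Finset.mem_filter] at hz1 hz2
    simp only [Finset.mem_coe, Finset.mem_range] at hi hj
    rcases lt_or_gt_of_ne hij with h | h
    · have h1 : f (i + 1) ≤ f j := by
        rcases Nat.lt_or_ge (i + 1) j with l | ge
        · exact hf _ _ l hj.le
        · have e : i + 1 = j := by omega
          exact le_of_eq (congrArg f e)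
      linarith [hz1.2.2, hz2.2.1]
    · have h1 : f (j + 1) ≤ f i := by
        rcases Nat.lt_or_ge (j + 1) i with l | ge
        · exact hf _ _ l hi.le
        · have e : j + 1 = i := by omega
          exact le_of_eq (congrArg f e)
      linarith [hz2.2.2, hz1.2.1]

/-- Theorem 3: if A, A' (of size k) have distinct pairs of consecutive
differences via a bijection σ of {1,...,k-1}, and B, B' are nonempty finite sets
of sizes ℓ, ℓ', then |A+B|·|A'+B'| ≥ c·(k³ℓℓ')^{1/2} for an absolute c > 0. -/
theorem distinct_pairs_of_consecutive_differences_sumsets :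
    ∃ c : ℝ, 0 < c ∧
      ∀ (k : ℕ) (a a' : ℕ → ℝ) (σ : ℕ → ℕ),
        (∀ i j, i < j → j < k → a i < a j) →
        (∀ i j, i < j → j < k → a' i < a' j) →
        Set.BijOn σ (Set.Iio (k - 1)) (Set.Iio (k - 1)) →
        (∀ i j, i + 1 < k → j + 1 < k →
          (a (i + 1) - a i, a' (σ i + 1) - a' (σ i))
            = (a (j + 1) - a j, a' (σ j + 1) - a' (σ j)) → i = j) →
        ∀ (B B' : Finset ℝ), B.Nonempty → B'.Nonempty →
          ((((Finset.image a (Finset.range k)) + B).card : ℝ) *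
            (((Finset.image a' (Finset.range k)) + B').card : ℝ))
            ≥ c * Real.sqrt ((k : ℝ) ^ 3 * B.card * B'.card) := by
  classical
  refine ⟨1/15, by norm_num, ?_⟩
  intro k a a' σ ha ha' hσ hdist B B' hB hB'
  rcases Nat.eq_zero_or_pos k with hk0 | hkpos
  · subst hk0
    simp [Finset.range_zero, Finset.image_empty, Finset.empty_add]
  rcases eq_or_lt_of_le (Nat.succ_le_of_lt hkpos) with hk1 | hk2
  · -- k = 1
    have hk1' : k = 1 := hk1.symm
    subst hk1'
    have hN : (Finset.image a (Finset.range 1) + B).card = B.card := by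
      rw [Finset.range_one, Finset.image_singleton, Finset.singleton_add,
        Finset.card_vadd_finset]
    have hM : (Finset.image a' (Finset.range 1) + B').card = B'.card := by
      rw [Finset.range_one, Finset.image_singleton, Finset.singleton_add,
        Finset.card_vadd_finset]
    rw [hN, hM, ge_iff_le]
    have hBpos : (1:ℝ) ≤ B.card := by exact_mod_cast Finset.card_pos.2 hB
    have hBpos' : (1:ℝ) ≤ B'.card := by exact_mod_cast Finset.card_pos.2 hB'
    have hprod : (1:ℝ) ≤ (B.card:ℝ) * B'.card := by nlinarith
    have hx : ((1:ℕ):ℝ) ^ 3 * B.card * B'.card ≤ ((B.card:ℝ) * B'.card)^2 := by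
      push_cast
      nlinarith [mul_nonneg (by linarith : (0:ℝ) ≤ (B.card:ℝ) * B'.card)
        (by linarith : (0:ℝ) ≤ (B.card:ℝ) * B'.card - 1)]
    have hs := Real.sqrt_le_sqrt hx
    rw [Real.sqrt_sq (by positivity)] at hs
    have h0 := Real.sqrt_nonneg (((1:ℕ):ℝ) ^ 3 * B.card * B'.card)
    set sq := Real.sqrt (((1:ℕ):ℝ) ^ 3 * B.card * B'.card) with hsqdef
    linarith
  -- main case : k ≥ 2
  have hk : 2 ≤ k := hk2
  set S : Finset ℝ := Finset.image a (Finset.range k) + B with hSdef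
  set S' : Finset ℝ := Finset.image a' (Finset.range k) + B' with hS'def
  have hmemS : ∀ i, i < k → ∀ b ∈ B, a i + b ∈ S := by
    intro i hi b hb
    exact Finset.add_mem_add (Finset.mem_image_of_mem a (Finset.mem_range.2 hi)) hb
  have hmemS' : ∀ j, j < k → ∀ b' ∈ B', a' j + b' ∈ S' := by
    intro j hj b' hb'
    exact Finset.add_mem_add (Finset.mem_image_of_mem a' (Finset.mem_range.2 hj)) hb'
  have hSne : S.Nonempty :=
    Finset.Nonempty.add ⟨a 0, Finset.mem_image_of_mem a (Finset.mem_range.2 (by omega))⟩ hB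
  have hS'ne : S'.Nonempty :=
    Finset.Nonempty.add ⟨a' 0, Finset.mem_image_of_mem a' (Finset.mem_range.2 (by omega))⟩ hB'
  set N := S.card with hNdef
  set M := S'.card with hMdef
  have hNpos : 0 < N := Finset.card_pos.2 hSne
  have hMpos : 0 < M := Finset.card_pos.2 hS'ne
  set D : Finset (ℕ × ℝ × ℝ) := (Finset.range (k-1)) ×ˢ (B ×ˢ B') with hD
  have hσmap : ∀ i, i < k - 1 → σ i < k - 1 := fun i hi =>
    Set.mem_Iio.1 (hσ.mapsTo (Set.mem_Iio.2 hi))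
  -- row sums
  have hsum1 : ∀ b ∈ B, ∑ i ∈ Finset.range (k-1), scount S (a i + b) (a (i+1) + b) ≤ N := by
    intro b hb
    exact sum_scount_le S (fun i => a i + b) (k-1) (fun i j hij hj => by
      have h := ha i j hij (by omega)
      show _ ≤ _
      linarith)
  have hsum2 : ∀ b' ∈ B', ∑ j ∈ Finset.range (k-1), scount S' (a' j + b') (a' (j+1) + b') ≤ M := by
    intro b' hb'
    exact sum_scount_le S' (fun j => a' j + b') (k-1) (fun i j hij hj => by
      have h := ha' i j hij (by omega)
      show _ ≤ _
      linarith)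
  have hreidx : ∀ b' : ℝ, ∑ i ∈ Finset.range (k-1), scount S' (a' (σ i) + b') (a' (σ i + 1) + b')
      = ∑ j ∈ Finset.range (k-1), scount S' (a' j + b') (a' (j+1) + b') := by
    intro b'
    refine Finset.sum_bij (fun i _ => σ i) ?_ ?_ ?_ ?_
    · intro i hi
      exact Finset.mem_range.2 (hσmap i (Finset.mem_range.1 hi))
    · intro i hi j hj hij
      exact hσ.injOn (Set.mem_Iio.2 (Finset.mem_range.1 hi))
        (Set.mem_Iio.2 (Finset.mem_range.1 hj)) hij
    · intro j hj
      obtain ⟨i, hi, hfi⟩ := hσ.surjOn (Set.mem_Iio.2 (Finset.mem_range.1 hj))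
      exact ⟨i, Finset.mem_range.2 (Set.mem_Iio.1 hi), hfi⟩
    · intro i hi; rfl
  -- level sets inject into S ×ˢ S'
  have hlevel : ∀ m m' : ℕ,
      (D.filter (fun p => scount S (a p.1 + p.2.1) (a (p.1+1) + p.2.1) = m ∧
        scount S' (a' (σ p.1) + p.2.2) (a' (σ p.1 + 1) + p.2.2) = m')).card ≤ N * M := by
    intro m m'
    have hle : (D.filter (fun p => scount S (a p.1 + p.2.1) (a (p.1+1) + p.2.1) = m ∧
        scount S' (a' (σ p.1) + p.2.2) (a' (σ p.1 + 1) + p.2.2) = m')).card ≤ (S ×ˢ S').card := by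
      apply Finset.card_le_card_of_injOn
        (fun p : ℕ × ℝ × ℝ => (a p.1 + p.2.1, a' (σ p.1) + p.2.2))
      · rintro ⟨i, b, b'⟩ hp
        have hpD := (Finset.mem_filter.1 hp).1
        rw [hD, Finset.mem_product] at hpD
        have hik : i < k - 1 := Finset.mem_range.1 hpD.1
        have hw := Finset.mem_product.1 hpD.2
        have hsi := hσmap i hik
        exact Finset.mem_product.2 ⟨hmemS i (by omega) b hw.1, hmemS' (σ i) (by omega) b' hw.2⟩
      · rintro ⟨i, b, b'⟩ hp ⟨j, c, c'⟩ hq heq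
        simp only [Finset.coe_filter, Set.mem_setOf_eq] at hp hq
        obtain ⟨hpD, hsp, hsp'⟩ := hp
        obtain ⟨hqD, hsq, hsq'⟩ := hq
        rw [hD, Finset.mem_product] at hpD hqD
        have hik : i < k - 1 := Finset.mem_range.1 hpD.1
        have hjk : j < k - 1 := Finset.mem_range.1 hqD.1
        have hbB : b ∈ B := (Finset.mem_product.1 hpD.2).1
        have hb'B : b' ∈ B' := (Finset.mem_product.1 hpD.2).2
        have hcB : c ∈ B := (Finset.mem_product.1 hqD.2).1
        have hc'B : c' ∈ B' := (Finset.mem_product.1 hqD.2).2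
        have e1 : a i + b = a j + c := congrArg Prod.fst heq
        have e2 : a' (σ i) + b' = a' (σ j) + c' := congrArg Prod.snd heq
        have hu : a (i+1) + b ∈ S := hmemS _ (by omega) b hbB
        have hv : a (j+1) + c ∈ S := hmemS _ (by omega) c hcB
        have hxu : a i + b < a (i+1) + b := by
          have h := ha i (i+1) (Nat.lt_succ_self i) (by omega); linarith
        have hxv : a i + b < a (j+1) + c := by
          have h := ha j (j+1) (Nat.lt_succ_self j) (by omega)
          rw [e1]; linarith
        have hcc : scount S (a i + b) (a (i+1) + b) = scount S (a i + b) (a (j+1) + c) := by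
          rw [hsp, e1, hsq]
        have hueq := upper_eq_of_scount_eq hu hv hxu hxv hcc
        have hsi : σ i < k - 1 := hσmap i hik
        have hsj : σ j < k - 1 := hσmap j hjk
        have hu' : a' (σ i + 1) + b' ∈ S' := hmemS' _ (by omega) b' hb'B
        have hv' : a' (σ j + 1) + c' ∈ S' := hmemS' _ (by omega) c' hc'B
        have hxu' : a' (σ i) + b' < a' (σ i + 1) + b' := by
          have h := ha' (σ i) (σ i + 1) (Nat.lt_succ_self _) (by omega); linarith
        have hxv' : a' (σ i) + b' < a' (σ j + 1) + c' := by
          have h := ha' (σ j) (σ j + 1) (Nat.lt_succ_self _) (by omega)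
          rw [e2]; linarith
        have hcc' : scount S' (a' (σ i) + b') (a' (σ i + 1) + b')
            = scount S' (a' (σ i) + b') (a' (σ j + 1) + c') := by
          rw [hsp', e2, hsq']
        have hueq' := upper_eq_of_scount_eq hu' hv' hxu' hxv' hcc'
        have hij : i = j := by
          apply hdist i j (by omega) (by omega)
          rw [Prod.mk.injEq]
          constructor
          · linarith
          · linarith
        subst hij
        have hbc : b = c := by linarith
        have hbc' : b' = c' := by linarith
        rw [hbc, hbc']
    calc _ ≤ (S ×ˢ S').card := hle
      _ = N * M := Finset.card_product _ _
  -- thresholds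
  set mb := 3 * N / (k-1) with hmb
  set mb' := 3 * M / (k-1) with hmb'
  set T1 := D.filter (fun p => scount S (a p.1 + p.2.1) (a (p.1+1) + p.2.1) ≤ mb ∧
      scount S' (a' (σ p.1) + p.2.2) (a' (σ p.1 + 1) + p.2.2) ≤ mb') with hT1def
  set T2 := D.filter (fun p => mb < scount S (a p.1 + p.2.1) (a (p.1+1) + p.2.1)) with hT2def
  set T3 := D.filter (fun p => mb' < scount S' (a' (σ p.1) + p.2.2) (a' (σ p.1 + 1) + p.2.2))
    with hT3def
  have hDcard : D.card = (k-1) * (B.card * B'.card) := by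
    rw [hD, Finset.card_product, Finset.card_product, Finset.card_range]
  have hcover : D.card ≤ T1.card + T2.card + T3.card := by
    have hsub : D ⊆ T1 ∪ T2 ∪ T3 := by
      intro p hp
      by_cases h1 : scount S (a p.1 + p.2.1) (a (p.1+1) + p.2.1) ≤ mb
      · by_cases h2 : scount S' (a' (σ p.1) + p.2.2) (a' (σ p.1 + 1) + p.2.2) ≤ mb'
        · exact Finset.mem_union_left _ (Finset.mem_union_left _ (Finset.mem_filter.2 ⟨hp, h1, h2⟩))
        · exact Finset.mem_union_right _ (Finset.mem_filter.2 ⟨hp, by omega⟩)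
      · exact Finset.mem_union_left _ (Finset.mem_union_right _ (Finset.mem_filter.2 ⟨hp, by omega⟩))
    calc D.card ≤ (T1 ∪ T2 ∪ T3).card := Finset.card_le_card hsub
      _ ≤ (T1 ∪ T2).card + T3.card := Finset.card_union_le _ _
      _ ≤ T1.card + T2.card + T3.card := by
          have h := Finset.card_union_le T1 T2; omega
  -- bound on T1
  have hT1 : T1.card ≤ mb * mb' * (N * M) := by
    have hsub : T1 ⊆ (Finset.range mb ×ˢ Finset.range mb').biUnion
        (fun q => D.filter (fun p => scount S (a p.1 + p.2.1) (a (p.1+1) + p.2.1) = q.1 + 1 ∧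
          scount S' (a' (σ p.1) + p.2.2) (a' (σ p.1 + 1) + p.2.2) = q.2 + 1)) := by
      intro p hp
      obtain ⟨hpD, h1, h2⟩ := Finset.mem_filter.1 hp
      have hpD' := hpD
      rw [hD, Finset.mem_product] at hpD'
      have hik : p.1 < k - 1 := Finset.mem_range.1 hpD'.1
      have hbB : p.2.1 ∈ B := (Finset.mem_product.1 hpD'.2).1
      have hb'B : p.2.2 ∈ B' := (Finset.mem_product.1 hpD'.2).2
      have hsi := hσmap p.1 hik
      have hpos1 : 1 ≤ scount S (a p.1 + p.2.1) (a (p.1+1) + p.2.1) :=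
        scount_pos (hmemS _ (by omega) _ hbB)
          (by have h := ha p.1 (p.1+1) (Nat.lt_succ_self _) (by omega); linarith)
      have hpos2 : 1 ≤ scount S' (a' (σ p.1) + p.2.2) (a' (σ p.1 + 1) + p.2.2) :=
        scount_pos (hmemS' _ (by omega) _ hb'B)
          (by have h := ha' (σ p.1) (σ p.1 + 1) (Nat.lt_succ_self _) (by omega); linarith)
      refine Finset.mem_biUnion.2 ⟨(scount S (a p.1 + p.2.1) (a (p.1+1) + p.2.1) - 1,
        scount S' (a' (σ p.1) + p.2.2) (a' (σ p.1 + 1) + p.2.2) - 1), ?_, ?_⟩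
      · rw [Finset.mem_product]
        exact ⟨Finset.mem_range.2 (by omega), Finset.mem_range.2 (by omega)⟩
      · exact Finset.mem_filter.2 ⟨hpD, by omega, by omega⟩
    refine (Finset.card_le_card hsub).trans (Finset.card_biUnion_le.trans ?_)
    calc ∑ q ∈ Finset.range mb ×ˢ Finset.range mb',
          (D.filter (fun p => scount S (a p.1 + p.2.1) (a (p.1+1) + p.2.1) = q.1 + 1 ∧
            scount S' (a' (σ p.1) + p.2.2) (a' (σ p.1 + 1) + p.2.2) = q.2 + 1)).card
        ≤ ∑ _q ∈ Finset.range mb ×ˢ Finset.range mb', N * M :=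
          Finset.sum_le_sum (fun q _ => hlevel _ _)
      _ = mb * mb' * (N * M) := by
          rw [Finset.sum_const, Finset.card_product, Finset.card_range, Finset.card_range,
            smul_eq_mul]
  -- total sums over D
  have hsumD2 : ∑ p ∈ D, scount S (a p.1 + p.2.1) (a (p.1+1) + p.2.1)
      ≤ B'.card * (B.card * N) := by
    rw [hD]
    simp only [Finset.sum_product]
    have step : ∀ i ∈ Finset.range (k-1),
        (∑ b ∈ B, ∑ _b' ∈ B', scount S (a i + b) (a (i+1) + b))
          = B'.card * ∑ b ∈ B, scount S (a i + b) (a (i+1) + b) := by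
      intro i _
      rw [Finset.mul_sum]
      exact Finset.sum_congr rfl fun b _ => by rw [Finset.sum_const, smul_eq_mul, mul_comm]
    rw [Finset.sum_congr rfl step, ← Finset.mul_sum, Finset.sum_comm]
    calc B'.card * ∑ b ∈ B, ∑ i ∈ Finset.range (k-1), scount S (a i + b) (a (i+1) + b)
        ≤ B'.card * ∑ _b ∈ B, N :=
          Nat.mul_le_mul_left _ (Finset.sum_le_sum fun b hb => hsum1 b hb)
      _ = B'.card * (B.card * N) := by rw [Finset.sum_const, smul_eq_mul]
  have hsumD3 : ∑ p ∈ D, scount S' (a' (σ p.1) + p.2.2) (a' (σ p.1 + 1) + p.2.2)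
      ≤ B.card * (B'.card * M) := by
    rw [hD]
    simp only [Finset.sum_product]
    have step : ∀ i ∈ Finset.range (k-1),
        (∑ _b ∈ B, ∑ b' ∈ B', scount S' (a' (σ i) + b') (a' (σ i + 1) + b'))
          = B.card * ∑ b' ∈ B', scount S' (a' (σ i) + b') (a' (σ i + 1) + b') := by
      intro i _
      rw [Finset.sum_const, smul_eq_mul]
    rw [Finset.sum_congr rfl step, ← Finset.mul_sum, Finset.sum_comm]
    calc B.card * ∑ b' ∈ B', ∑ i ∈ Finset.range (k-1),
          scount S' (a' (σ i) + b') (a' (σ i + 1) + b')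
        ≤ B.card * ∑ _b' ∈ B', M := by
          apply Nat.mul_le_mul_left
          apply Finset.sum_le_sum
          intro b' hb'
          rw [hreidx b']
          exact hsum2 b' hb'
      _ = B.card * (B'.card * M) := by rw [Finset.sum_const, smul_eq_mul]
  -- bounds on T2, T3
  have hT2count : T2.card * (mb + 1) ≤ B'.card * (B.card * N) := by
    have h1 : T2.card • (mb+1) ≤ ∑ p ∈ T2, scount S (a p.1 + p.2.1) (a (p.1+1) + p.2.1) :=
      Finset.card_nsmul_le_sum _ _ _ (fun p hp => (Finset.mem_filter.1 hp).2)
    have h2 : ∑ p ∈ T2, scount S (a p.1 + p.2.1) (a (p.1+1) + p.2.1)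
        ≤ ∑ p ∈ D, scount S (a p.1 + p.2.1) (a (p.1+1) + p.2.1) :=
      Finset.sum_le_sum_of_subset (Finset.filter_subset _ _)
    have h3 := (h1.trans (h2.trans hsumD2))
    simpa [smul_eq_mul] using h3
  have hT3count : T3.card * (mb' + 1) ≤ B.card * (B'.card * M) := by
    have h1 : T3.card • (mb'+1)
        ≤ ∑ p ∈ T3, scount S' (a' (σ p.1) + p.2.2) (a' (σ p.1 + 1) + p.2.2) :=
      Finset.card_nsmul_le_sum _ _ _ (fun p hp => (Finset.mem_filter.1 hp).2)
    have h2 : ∑ p ∈ T3, scount S' (a' (σ p.1) + p.2.2) (a' (σ p.1 + 1) + p.2.2)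
        ≤ ∑ p ∈ D, scount S' (a' (σ p.1) + p.2.2) (a' (σ p.1 + 1) + p.2.2) :=
      Finset.sum_le_sum_of_subset (Finset.filter_subset _ _)
    have h3 := (h1.trans (h2.trans hsumD3))
    simpa [smul_eq_mul] using h3
  have h3N : 3 * N < (k-1) * (mb + 1) := by
    have hdm := Nat.div_add_mod (3 * N) (k-1)
    rw [← hmb] at hdm
    have hlt : (3*N) % (k-1) < (k-1) := Nat.mod_lt _ (by omega)
    calc 3 * N = (k-1) * mb + (3*N) % (k-1) := hdm.symm
      _ < (k-1) * mb + (k-1) := Nat.add_lt_add_left hlt _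
      _ = (k-1) * (mb+1) := by ring
  have h3M : 3 * M < (k-1) * (mb' + 1) := by
    have hdm := Nat.div_add_mod (3 * M) (k-1)
    rw [← hmb'] at hdm
    have hlt : (3*M) % (k-1) < (k-1) := Nat.mod_lt _ (by omega)
    calc 3 * M = (k-1) * mb' + (3*M) % (k-1) := hdm.symm
      _ < (k-1) * mb' + (k-1) := Nat.add_lt_add_left hlt _
      _ = (k-1) * (mb'+1) := by ring
  have hT2 : 3 * T2.card ≤ (k-1) * (B.card * B'.card) := by
    have key : (3 * T2.card) * N ≤ ((k-1) * (B.card * B'.card)) * N := by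
      calc (3 * T2.card) * N = (3 * N) * T2.card := by ring
        _ ≤ ((k-1) * (mb+1)) * T2.card := Nat.mul_le_mul_right _ h3N.le
        _ = (k-1) * (T2.card * (mb+1)) := by ring
        _ ≤ (k-1) * (B'.card * (B.card * N)) := Nat.mul_le_mul_left _ hT2count
        _ = ((k-1) * (B.card * B'.card)) * N := by ring
    exact Nat.le_of_mul_le_mul_right key hNpos
  have hT3 : 3 * T3.card ≤ (k-1) * (B.card * B'.card) := by
    have key : (3 * T3.card) * M ≤ ((k-1) * (B.card * B'.card)) * M := by
      calc (3 * T3.card) * M = (3 * M) * T3.card := by ring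
        _ ≤ ((k-1) * (mb'+1)) * T3.card := Nat.mul_le_mul_right _ h3M.le
        _ = (k-1) * (T3.card * (mb'+1)) := by ring
        _ ≤ (k-1) * (B.card * (B'.card * M)) := Nat.mul_le_mul_left _ hT3count
        _ = ((k-1) * (B.card * B'.card)) * M := by ring
    exact Nat.le_of_mul_le_mul_right key hMpos
  have hmain : (k-1) * (B.card * B'.card) ≤ 3 * T1.card := by
    have h := hcover
    rw [hDcard] at h
    linarith
  have hKmb : (k-1) * mb ≤ 3 * N := by
    calc (k-1) * mb = mb * (k-1) := mul_comm _ _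
      _ ≤ 3 * N := by rw [hmb]; exact Nat.div_mul_le_self _ _
  have hKmb' : (k-1) * mb' ≤ 3 * M := by
    calc (k-1) * mb' = mb' * (k-1) := mul_comm _ _
      _ ≤ 3 * M := by rw [hmb']; exact Nat.div_mul_le_self _ _
  have hfinalN : k^3 * (B.card * B'.card) ≤ 225 * (N * M)^2 := by
    have h8 : k ≤ 2 * (k-1) := by omega
    have hKcube : k^3 * (B.card * B'.card) ≤ 8 * ((k-1)^3 * (B.card * B'.card)) := by
      calc k^3 * (B.card * B'.card) ≤ (2*(k-1))^3 * (B.card * B'.card) :=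
            Nat.mul_le_mul_right _ (Nat.pow_le_pow_left h8 3)
        _ = 8 * ((k-1)^3 * (B.card * B'.card)) := by ring
    have hmid : (k-1)^3 * (B.card * B'.card) ≤ 27 * (N*M)^2 := by
      calc (k-1)^3 * (B.card * B'.card) = (k-1)^2 * ((k-1) * (B.card * B'.card)) := by ring
        _ ≤ (k-1)^2 * (3 * T1.card) := Nat.mul_le_mul_left _ hmain
        _ ≤ (k-1)^2 * (3 * (mb * mb' * (N * M))) :=
            Nat.mul_le_mul_left _ (Nat.mul_le_mul_left _ hT1)
        _ = 3 * ((((k-1) * mb) * ((k-1) * mb')) * (N * M)) := by ring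
        _ ≤ 3 * (((3*N) * (3*M)) * (N*M)) :=
            Nat.mul_le_mul_left _ (Nat.mul_le_mul_right _ (Nat.mul_le_mul hKmb hKmb'))
        _ = 27 * (N*M)^2 := by ring
    calc k^3 * (B.card*B'.card) ≤ 8 * ((k-1)^3 * (B.card*B'.card)) := hKcube
      _ ≤ 8 * (27 * (N*M)^2) := Nat.mul_le_mul_left _ hmid
      _ = 216 * (N*M)^2 := by ring
      _ ≤ 225 * (N*M)^2 := Nat.mul_le_mul_right _ (by norm_num)
  rw [ge_iff_le]
  have hcast : ((k:ℝ)) ^ 3 * (B.card:ℝ) * (B'.card:ℝ) ≤ (15 * ((N:ℝ) * (M:ℝ)))^2 := by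
    have h := (Nat.cast_le (α := ℝ)).2 hfinalN
    push_cast at h
    nlinarith [h]
  have hs := Real.sqrt_le_sqrt hcast
  rw [Real.sqrt_sq (mul_nonneg (by norm_num : (0:ℝ) ≤ 15)
    (mul_nonneg (Nat.cast_nonneg N) (Nat.cast_nonneg M)))] at hs
  have h0 := Real.sqrt_nonneg ((k:ℝ) ^ 3 * (B.card:ℝ) * (B'.card:ℝ))
  set sq := Real.sqrt ((k:ℝ) ^ 3 * (B.card:ℝ) * (B'.card:ℝ)) with hsqdef
  linarith
end

section
/- With the setup of Theorem 3 (A, A' of size k with distinct pairs of consecutive differences via bijection σ, and B, B' finite sets of reals of sizes ℓ, ℓ'), the (k-1)·ℓ·ℓ' quadruples (a_i + b, a_{i+1} + b, a'_{σ(i)} + b', a'_{σ(i)+1} + b') for 1 ≤ i ≤ k-1, b ∈ B, b' ∈ B' are pairwise distinct; i.e., the map (i, b, b') ↦ (a_i + b, a_{i+1} + b, a'_{σ(i)} + b', a'_{σ(i)+1} + b') is injective. -/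
open Pointwise

/-- The (k-1)·ℓ·ℓ' quadruples (a_i+b, a_{i+1}+b, a'_{σ(i)}+b', a'_{σ(i)+1}+b')
are pairwise distinct: (i, b, b') ↦ quadruple is injective. -/
theorem quadruples_injective
    (k : ℕ) (a a' : ℕ → ℝ) (σ : ℕ → ℕ)
    (hmono : ∀ i j, i < j → j < k → a i < a j)
    (hmono' : ∀ i j, i < j → j < k → a' i < a' j)
    (hσ : Set.BijOn σ (Set.Iio (k - 1)) (Set.Iio (k - 1)))
    (hdist : ∀ i j, i + 1 < k → j + 1 < k →
      (a (i + 1) - a i, a' (σ i + 1) - a' (σ i))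
        = (a (j + 1) - a j, a' (σ j + 1) - a' (σ j)) → i = j)
    (B B' : Finset ℝ) :
    ∀ i j, i + 1 < k → j + 1 < k → ∀ b ∈ B, ∀ v ∈ B, ∀ b' ∈ B', ∀ v' ∈ B',
      (a i + b, a (i + 1) + b, a' (σ i) + b', a' (σ i + 1) + b')
        = (a j + v, a (j + 1) + v, a' (σ j) + v', a' (σ j + 1) + v') →
      i = j ∧ b = v ∧ b' = v' := by
  intro i j hi hj b hb v hv b' hb' v' hv' h
  simp only [Prod.mk.injEq] at h
  obtain ⟨h1, h2, h3, h4⟩ := h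
  have hij : i = j := hdist i j hi hj (by
    simp only [Prod.mk.injEq]
    constructor <;> linarith)
  subst hij
  exact ⟨rfl, by linarith, by linarith⟩
end

section
/- Let F : ℝ → ℝ be a strictly convex function, and let A, B, C be finite sets of real numbers with |A| = |B| = |C| = n. Then there is an absolute constant c > 0 such that max(|A + B|, |F(A) + C|) ≥ c·n^{5/4}. -/
open Pointwise Finset



/-- Uniqueness of the "u-th next element of D after x". -/
lemma count_unique (D : Finset ℝ) {x z₁ z₂ : ℝ} (h1 : z₁ ∈ D) (h2 : z₂ ∈ D)
    (hx1 : x < z₁) (hx2 : x < z₂)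
    (hc : (D.filter fun w => x < w ∧ w ≤ z₁).card = (D.filter fun w => x < w ∧ w ≤ z₂).card) :
    z₁ = z₂ := by
  rcases le_total z₁ z₂ with h | h
  · have hsub : (D.filter fun w => x < w ∧ w ≤ z₁) ⊆ (D.filter fun w => x < w ∧ w ≤ z₂) := by
      intro w hw
      simp only [mem_filter] at hw ⊢
      exact ⟨hw.1, hw.2.1, hw.2.2.trans h⟩
    have := Finset.eq_of_subset_of_card_le hsub hc.ge
    have hz : z₂ ∈ (D.filter fun w => x < w ∧ w ≤ z₁) := by
      rw [this]; simp only [mem_filter]; exact ⟨h2, hx2, le_rfl⟩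
    simp only [mem_filter] at hz
    exact le_antisymm h hz.2.2
  · have hsub : (D.filter fun w => x < w ∧ w ≤ z₂) ⊆ (D.filter fun w => x < w ∧ w ≤ z₁) := by
      intro w hw
      simp only [mem_filter] at hw ⊢
      exact ⟨hw.1, hw.2.1, hw.2.2.trans h⟩
    have := Finset.eq_of_subset_of_card_le hsub hc.le
    have hz : z₁ ∈ (D.filter fun w => x < w ∧ w ≤ z₂) := by
      rw [this]; simp only [mem_filter]; exact ⟨h1, hx1, le_rfl⟩
    simp only [mem_filter] at hz
    exact (le_antisymm h hz.2.2).symm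

/-- Gaps along a strictly monotone sequence are disjoint, so the gap counts sum to ≤ |D|. -/
lemma gap_sum {N : ℕ} (x : Fin (N + 1) → ℝ) (hx : StrictMono x) (D : Finset ℝ) (b : ℝ) :
    ∑ i : Fin N, (D.filter fun w => x i.castSucc + b < w ∧ w ≤ x i.succ + b).card ≤ D.card := by
  classical
  rw [← Finset.card_biUnion]
  · apply Finset.card_le_card
    intro w hw
    simp only [Finset.mem_biUnion, mem_filter] at hw
    obtain ⟨i, _, hw, _⟩ := hw
    exact hw
  · have key : ∀ i j : Fin N, i < j →
        Disjoint (D.filter fun w => x i.castSucc + b < w ∧ w ≤ x i.succ + b)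
          (D.filter fun w => x j.castSucc + b < w ∧ w ≤ x j.succ + b) := by
      intro i j h
      simp only [Finset.disjoint_left, mem_filter]
      rintro w ⟨_, _, hw2⟩ ⟨_, hw3, _⟩
      have : x i.succ ≤ x j.castSucc := hx.le_iff_le.mpr (by
        simp [Fin.succ_le_castSucc_iff, h])
      linarith
    intro i _ j _ hij
    rcases hij.lt_or_gt with h | h
    · exact key i j h
    · exact (key j i h).symm

open scoped Classical in
noncomputable def gapCount {N : ℕ} (D : Finset ℝ) (x : Fin (N + 1) → ℝ) (b : ℝ) (i : Fin N) : ℕ :=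
  (D.filter fun w => x i.castSucc + b < w ∧ w ≤ x i.succ + b).card

open scoped Classical in
lemma gapCount_sum {N : ℕ} (D : Finset ℝ) (x : Fin (N + 1) → ℝ) (hx : StrictMono x) (b : ℝ) :
    ∑ i : Fin N, gapCount D x b i ≤ D.card :=
  gap_sum x hx D b

open scoped Classical in
lemma gapCount_pos {N : ℕ} (D : Finset ℝ) (x : Fin (N + 1) → ℝ) (hx : StrictMono x) (b : ℝ)
    (i : Fin N) (h : x i.succ + b ∈ D) : 1 ≤ gapCount D x b i := by
  rw [gapCount, Nat.succ_le_iff, Finset.card_pos]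
  exact ⟨x i.succ + b, by
    simp only [Finset.mem_filter]
    exact ⟨h, by simpa using hx (Fin.castSucc_lt_succ (i := i)), le_rfl⟩⟩

open scoped Classical in
/-- If `4s < N·(gap count)` on a bad set, the bad set has size < N/4. -/
lemma bad_small {N s : ℕ} (hN : 0 < N) (D : Finset ℝ) (x : Fin (N + 1) → ℝ) (hx : StrictMono x)
    (b : ℝ) (hs : D.card = s) :
    4 * ((Finset.univ : Finset (Fin N)).filter fun i => 4 * s < N * gapCount D x b i).card < N := by
  set Bd := (Finset.univ : Finset (Fin N)).filter fun i => 4 * s < N * gapCount D x b i with hBd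
  rcases Nat.eq_zero_or_pos Bd.card with h0 | hpos
  · simpa [h0] using hN
  have hsum : ∑ i ∈ Bd, gapCount D x b i ≤ s := by
    calc ∑ i ∈ Bd, gapCount D x b i ≤ ∑ i : Fin N, gapCount D x b i :=
          Finset.sum_le_sum_of_subset (Finset.filter_subset _ _)
      _ ≤ D.card := gapCount_sum D x hx b
      _ = s := hs
  have hlow : Bd.card * (4 * s + 1) ≤ N * s := by
    calc Bd.card * (4 * s + 1) = ∑ _i ∈ Bd, (4 * s + 1) := by
          rw [Finset.sum_const, smul_eq_mul]
      _ ≤ ∑ i ∈ Bd, N * gapCount D x b i := by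
          apply Finset.sum_le_sum
          intro i hi
          rw [hBd, Finset.mem_filter] at hi
          exact hi.2
      _ = N * ∑ i ∈ Bd, gapCount D x b i := by rw [Finset.mul_sum]
      _ ≤ N * s := Nat.mul_le_mul_left _ hsum
  have : 4 * Bd.card * s < N * s := by
    calc 4 * Bd.card * s < Bd.card * (4 * s + 1) := by nlinarith
      _ ≤ N * s := hlow
  have hs0 : 0 < s := by nlinarith
  exact Nat.lt_of_mul_lt_mul_right (a := s) (by nlinarith)



open scoped Classical in
open scoped Classical in
/-- Main counting lemma (Elekes–Nathanson–Ruzsa double counting). -/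
lemma main_count {N n s t : ℕ} (hN : 0 < N) (x y : Fin (N + 1) → ℝ)
    (hx : StrictMono x) (hy : StrictMono y)
    (B C D S : Finset ℝ) (hBn : B.card = n) (hCn : C.card = n)
    (hs : D.card = s) (ht : S.card = t)
    (hxD : ∀ (i : Fin (N + 1)), ∀ b ∈ B, x i + b ∈ D)
    (hyS : ∀ (i : Fin (N + 1)), ∀ c ∈ C, y i + c ∈ S)
    (hinj : ∀ i j : Fin N, x i.succ - x i.castSucc = x j.succ - x j.castSucc →
      y i.succ - y i.castSucc = y j.succ - y j.castSucc → i = j) :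
    N ^ 3 * n ^ 2 ≤ 32 * s ^ 2 * t ^ 2 := by
  rcases Nat.eq_zero_or_pos n with hn0 | hn
  · simp [hn0]
  -- the set of good triples
  set T : Finset (Fin N × ℝ × ℝ) :=
    ((Finset.univ : Finset (Fin N)) ×ˢ B ×ˢ C).filter
      (fun p => N * gapCount D x p.2.1 p.1 ≤ 4 * s ∧ N * gapCount S y p.2.2 p.1 ≤ 4 * t)
    with hT
  -- lower bound on T.card
  have hlower : N * n ^ 2 ≤ 2 * T.card := by
    have hfib : T.card = ∑ bc ∈ B ×ˢ C, (T.filter fun p => p.2 = bc).card := by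
      apply Finset.card_eq_sum_card_fiberwise
      intro p hp
      replace hp : p ∈ T := hp
      simp only [hT, Finset.mem_filter, Finset.mem_product] at hp
      exact Finset.mem_product.mpr ⟨hp.1.2.1, hp.1.2.2⟩
    have hfiber : ∀ bc ∈ B ×ˢ C, N ≤ 2 * (T.filter fun p => p.2 = bc).card := by
      rintro ⟨b, c⟩ hbc
      rw [Finset.mem_product] at hbc
      set G : Finset (Fin N) := (Finset.univ : Finset (Fin N)).filter
        (fun i => N * gapCount D x b i ≤ 4 * s ∧ N * gapCount S y c i ≤ 4 * t) with hG
      have hGcard : G.card = (T.filter fun p => p.2 = (b, c)).card := by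
        apply Finset.card_bij (fun i _ => (i, b, c))
        · intro i hi
          rw [hG, Finset.mem_filter] at hi
          rw [Finset.mem_filter, hT, Finset.mem_filter]
          refine ⟨⟨?_, hi.2⟩, rfl⟩
          simp [Finset.mem_product, hbc.1, hbc.2]
        · intro i _ j _ h
          exact (Prod.mk.injEq _ _ _ _).mp h |>.1
        · rintro ⟨i, b', c'⟩ hp
          rw [Finset.mem_filter] at hp
          have hbc' : (b', c') = (b, c) := hp.2
          obtain ⟨rfl, rfl⟩ := Prod.mk.injEq _ _ _ _ |>.mp hbc'
          refine ⟨i, ?_, rfl⟩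
          rw [hG, Finset.mem_filter]
          rw [hT, Finset.mem_filter] at hp
          exact ⟨Finset.mem_univ _, hp.1.2⟩
      -- G is big: complement of two small bad sets
      set Bd1 := (Finset.univ : Finset (Fin N)).filter (fun i => 4 * s < N * gapCount D x b i)
      set Bd2 := (Finset.univ : Finset (Fin N)).filter (fun i => 4 * t < N * gapCount S y c i)
      have h1 : 4 * Bd1.card < N := bad_small hN D x hx b hs
      have h2 : 4 * Bd2.card < N := bad_small hN S y hy c ht
      have hcover : (Finset.univ : Finset (Fin N)) ⊆ Bd1 ∪ Bd2 ∪ G := by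
        intro i _
        simp only [Bd1, Bd2, hG, Finset.mem_union, Finset.mem_filter, Finset.mem_univ,
          true_and]
        by_cases hu : 4 * s < N * gapCount D x b i
        · exact Or.inl (Or.inl hu)
        · by_cases hv : 4 * t < N * gapCount S y c i
          · exact Or.inl (Or.inr hv)
          · exact Or.inr ⟨Nat.le_of_not_lt hu, Nat.le_of_not_lt hv⟩
      have hN' : N ≤ Bd1.card + Bd2.card + G.card := by
        calc N = (Finset.univ : Finset (Fin N)).card := (Finset.card_univ.trans (Fintype.card_fin N)).symm
          _ ≤ (Bd1 ∪ Bd2 ∪ G).card := Finset.card_le_card hcover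
          _ ≤ (Bd1 ∪ Bd2).card + G.card := Finset.card_union_le _ _
          _ ≤ Bd1.card + Bd2.card + G.card := by
              have := Finset.card_union_le Bd1 Bd2
              omega
      rw [← hGcard]
      omega
    calc N * n ^ 2 = ∑ _bc ∈ B ×ˢ C, N := by
          rw [Finset.sum_const, smul_eq_mul, Finset.card_product, hBn, hCn]
          ring
      _ ≤ ∑ bc ∈ B ×ˢ C, 2 * (T.filter fun p => p.2 = bc).card := Finset.sum_le_sum hfiber
      _ = 2 * T.card := by rw [← Finset.mul_sum, ← hfib]
  -- upper bound on T.card via injection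
  have hupper : T.card ≤ s * t * (4 * s / N) * (4 * t / N) := by
    have := Finset.card_le_card_of_injOn
      (f := fun p : Fin N × ℝ × ℝ =>
        (x p.1.castSucc + p.2.1, y p.1.castSucc + p.2.2,
          gapCount D x p.2.1 p.1, gapCount S y p.2.2 p.1))
      (s := T)
      (t := D ×ˢ S ×ˢ Finset.Icc 1 (4 * s / N) ×ˢ Finset.Icc 1 (4 * t / N))
      ?_ ?_
    · calc T.card ≤ (D ×ˢ S ×ˢ Finset.Icc 1 (4 * s / N) ×ˢ Finset.Icc 1 (4 * t / N)).card := this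
        _ = s * t * (4 * s / N) * (4 * t / N) := by
            simp [Finset.card_product, Nat.card_Icc, hs, ht]
            ring
    · -- maps into the target
      rintro ⟨i, b, c⟩ hp
      replace hp : (i, b, c) ∈ T := hp
      simp only [hT, Finset.mem_filter, Finset.mem_product] at hp
      obtain ⟨⟨-, hb, hc⟩, hu, hv⟩ := hp
      show _ ∈ D ×ˢ S ×ˢ Finset.Icc 1 (4 * s / N) ×ˢ Finset.Icc 1 (4 * t / N)
      simp only [Finset.mem_product, Finset.mem_Icc]
      refine ⟨hxD _ _ hb, hyS _ _ hc, ⟨?_, ?_⟩, ?_, ?_⟩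
      · exact gapCount_pos D x hx b i (hxD _ _ hb)
      · exact (Nat.le_div_iff_mul_le hN).mpr (by rw [mul_comm]; exact hu)
      · exact gapCount_pos S y hy c i (hyS _ _ hc)
      · exact (Nat.le_div_iff_mul_le hN).mpr (by rw [mul_comm]; exact hv)
    · -- injectivity
      rintro ⟨i, b, c⟩ hp ⟨j, b', c'⟩ hq heq
      simp only [Prod.mk.injEq] at heq
      obtain ⟨hX, hY, hu, hv⟩ := heq
      simp only [Finset.mem_coe, hT, Finset.mem_filter, Finset.mem_product] at hp hq
      obtain ⟨⟨-, hb, hc⟩, -⟩ := hp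
      obtain ⟨⟨-, hb', hc'⟩, -⟩ := hq
      have hdx : x i.succ - x i.castSucc = x j.succ - x j.castSucc := by
        have hz : x i.succ + b = x j.succ + b' := by
          apply count_unique D (hxD _ _ hb) (hxD _ _ hb')
            (x := x i.castSucc + b)
          · have := hx (Fin.castSucc_lt_succ (i := i)); linarith
          · rw [hX]; have := hx (Fin.castSucc_lt_succ (i := j)); linarith
          · have e1 : (D.filter fun w => x i.castSucc + b < w ∧ w ≤ x i.succ + b).card
                = gapCount D x b i := rfl
            rw [e1, hu, hX]
            rfl
        have hX' := hX
        linarith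
      have hdy : y i.succ - y i.castSucc = y j.succ - y j.castSucc := by
        have hz : y i.succ + c = y j.succ + c' := by
          apply count_unique S (hyS _ _ hc) (hyS _ _ hc')
            (x := y i.castSucc + c)
          · have := hy (Fin.castSucc_lt_succ (i := i)); linarith
          · rw [hY]; have := hy (Fin.castSucc_lt_succ (i := j)); linarith
          · have e1 : (S.filter fun w => y i.castSucc + c < w ∧ w ≤ y i.succ + c).card
                = gapCount S y c i := rfl
            rw [e1, hv, hY]
            rfl
        linarith
      have hij : i = j := hinj i j hdx hdy
      subst hij
      have hbb : b = b' := by linarith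
      have hcc : c = c' := by linarith
      rw [hbb, hcc]
  -- combine
  have step : N * n ^ 2 ≤ 2 * (s * t * (4 * s / N) * (4 * t / N)) := by omega
  have hNU : N * (4 * s / N) ≤ 4 * s := Nat.mul_div_le _ _ |>.trans_eq rfl
  have hNV : N * (4 * t / N) ≤ 4 * t := Nat.mul_div_le _ _
  calc N ^ 3 * n ^ 2 = N ^ 2 * (N * n ^ 2) := by ring
    _ ≤ N ^ 2 * (2 * (s * t * (4 * s / N) * (4 * t / N))) := Nat.mul_le_mul_left _ step
    _ = 2 * (s * t) * ((N * (4 * s / N)) * (N * (4 * t / N))) := by ring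
    _ ≤ 2 * (s * t) * ((4 * s) * (4 * t)) := Nat.mul_le_mul_left _ (Nat.mul_le_mul hNU hNV)
    _ = 32 * s ^ 2 * t ^ 2 := by ring


/-- Chord slopes of a strictly convex function strictly increase:
if `p < q ≤ r < u` with `q - p = u - r`, then `F q - F p < F u - F r`. -/
lemma chord_gap_lt {F : ℝ → ℝ} (hF : StrictConvexOn ℝ Set.univ F) {p q r u : ℝ}
    (h1 : p < q) (h2 : q ≤ r) (h3 : r < u) (hd : q - p = u - r) :
    F q - F p < F u - F r := by
  have hmem : ∀ z : ℝ, z ∈ Set.univ := fun z => Set.mem_univ z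
  have hslope : (F q - F p) / (q - p) < (F u - F r) / (u - r) := by
    rcases eq_or_lt_of_le h2 with rfl | h2'
    · exact hF.slope_strict_mono_adjacent (hmem p) (hmem u) h1 h3
    · calc (F q - F p) / (q - p) < (F r - F q) / (r - q) :=
            hF.slope_strict_mono_adjacent (hmem p) (hmem r) h1 h2'
        _ < (F u - F r) / (u - r) :=
            hF.slope_strict_mono_adjacent (hmem q) (hmem u) h2' h3
  have hpq : 0 < q - p := by linarith
  rw [div_lt_div_iff₀ hpq (by linarith : (0:ℝ) < u - r)] at hslope
  rw [hd] at hslope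
  have hur : 0 < u - r := by linarith
  exact lt_of_mul_lt_mul_right hslope hur.le

/-- Unimodal split: on one half of any finite set (sorted), a strictly convex `F`
is strictly monotone. -/
lemma unimodal_split {F : ℝ → ℝ} (hF : StrictConvexOn ℝ Set.univ F)
    {n : ℕ} (hn : 0 < n) (A : Finset ℝ) (hA : A.card = n) :
    ∃ (m : ℕ) (e : Fin m → ℝ), n ≤ 2 * m ∧ StrictMono e ∧ (∀ i, e i ∈ A) ∧
      (StrictMono (F ∘ e) ∨ StrictAnti (F ∘ e)) := by
  classical
  set aa : Fin n ↪o ℝ := A.orderEmbOfFin hA with haa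
  have haaA : ∀ i, aa i ∈ A := fun i => A.orderEmbOfFin_mem hA i
  set g : Fin n → ℝ := fun i => F (aa i) with hg
  -- the set of minimizers of g
  set M : Finset (Fin n) := Finset.univ.filter (fun i => ∀ j, g i ≤ g j) with hM
  have hMne : M.Nonempty := by
    obtain ⟨i, -, hi⟩ := Finset.exists_min_image Finset.univ g ⟨⟨0, hn⟩, Finset.mem_univ _⟩
    exact ⟨i, by simp only [hM, Finset.mem_filter, Finset.mem_univ, true_and]
                 exact fun j => hi j (Finset.mem_univ j)⟩
  set p : Fin n := M.max' hMne with hp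
  set p' : Fin n := M.min' hMne with hp'
  have hpM : p ∈ M := M.max'_mem hMne
  have hp'M : p' ∈ M := M.min'_mem hMne
  have hpmin : ∀ j, g p ≤ g j := by
    have := hpM; rw [hM, Finset.mem_filter] at this; exact this.2
  have hp'min : ∀ j, g p' ≤ g j := by
    have := hp'M; rw [hM, Finset.mem_filter] at this; exact this.2
  -- strictly increasing after p
  have hinc : ∀ i j : Fin n, p ≤ i → i < j → g i < g j := by
    intro i j hpi hij
    have hbase : ∀ k : Fin n, p < k → g p < g k := by
      intro k hk
      rcases lt_or_eq_of_le (hpmin k) with h | h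
      · exact h
      · exfalso
        have hkM : k ∈ M := by
          rw [hM, Finset.mem_filter]
          exact ⟨Finset.mem_univ _, fun j => h ▸ hpmin j⟩
        exact absurd (M.le_max' k hkM) (not_le.mpr hk)
    rcases eq_or_lt_of_le hpi with rfl | hpi'
    · exact hbase j (lt_of_le_of_lt hpi hij)
    · -- p < i < j : use slopes
      have h1 : aa p < aa i := aa.strictMono hpi'
      have h2 : aa i < aa j := aa.strictMono hij
      have hgi : g p < g i := hbase i hpi'
      have hsl : (g i - g p) / (aa i - aa p) < (g j - g i) / (aa j - aa i) :=
        hF.slope_strict_mono_adjacent (Set.mem_univ _) (Set.mem_univ _) h1 h2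
      have hpos : (0:ℝ) < (g i - g p) / (aa i - aa p) :=
        div_pos (by linarith) (by linarith)
      have : (0:ℝ) < (g j - g i) / (aa j - aa i) := lt_trans hpos hsl
      have := (div_pos_iff.mp this)
      rcases this with ⟨h, -⟩ | ⟨-, h⟩
      · linarith
      · linarith
  -- strictly decreasing before p'
  have hdec : ∀ i j : Fin n, i < j → j ≤ p' → g j < g i := by
    intro i j hij hjp
    have hbase : ∀ k : Fin n, k < p' → g p' < g k := by
      intro k hk
      rcases lt_or_eq_of_le (hp'min k) with h | h
      · exact h
      · exfalso
        have hkM : k ∈ M := by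
          rw [hM, Finset.mem_filter]
          exact ⟨Finset.mem_univ _, fun j => h ▸ hp'min j⟩
        exact absurd (M.min'_le k hkM) (not_le.mpr hk)
    rcases eq_or_lt_of_le hjp with rfl | hjp'
    · exact hbase i hij
    · have h1 : aa i < aa j := aa.strictMono hij
      have h2 : aa j < aa p' := aa.strictMono hjp'
      have hgj : g p' < g j := hbase j hjp'
      have hsl : (g j - g i) / (aa j - aa i) < (g p' - g j) / (aa p' - aa j) :=
        hF.slope_strict_mono_adjacent (Set.mem_univ _) (Set.mem_univ _) h1 h2
      have hneg : (g p' - g j) / (aa p' - aa j) < 0 :=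
        div_neg_of_neg_of_pos (by linarith) (by linarith)
      have : (g j - g i) / (aa j - aa i) < 0 := lt_trans hsl hneg
      have := (div_neg_iff.mp this)
      rcases this with ⟨-, h⟩ | ⟨h, -⟩
      · linarith
      · linarith
  -- p ≤ p' + 1
  have hpp' : (p : ℕ) ≤ (p' : ℕ) + 1 := by
    by_contra hcon
    push_neg at hcon
    -- p' + 1 < p, consider k strictly between
    have hk1n : (p' : ℕ) + 1 < n := lt_trans hcon p.isLt
    set k : Fin n := ⟨(p' : ℕ) + 1, hk1n⟩ with hk
    have hp'k : p' < k := by rw [Fin.lt_def]; simp [hk]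
    have hkp : k < p := by rw [Fin.lt_def]; exact hcon
    have h1 : aa p' < aa k := aa.strictMono hp'k
    have h2 : aa k < aa p := aa.strictMono (hkp)
    have heq : g p' = g p := le_antisymm (hp'min p) (hpmin p')
    have : g k < max (g p') (g p) := by
      apply hF.lt_on_openSegment (Set.mem_univ _) (Set.mem_univ _)
        (ne_of_lt (lt_trans h1 h2))
      rw [openSegment_eq_Ioo (lt_trans h1 h2)]
      exact ⟨h1, h2⟩
    rw [heq, max_self] at this
    exact absurd (hpmin k) (not_le.mpr this)
  -- choose the bigger half
  rcases le_or_gt n (2 * ((p' : ℕ) + 1)) with hhalf | hhalf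
  · -- decreasing part: indices 0..p'
    refine ⟨(p' : ℕ) + 1, fun i => aa ⟨i, lt_of_lt_of_le i.isLt (Nat.succ_le_of_lt p'.isLt)⟩,
      hhalf, ?_, fun i => haaA _, Or.inr ?_⟩
    · intro i j hij
      exact aa.strictMono (by rw [Fin.lt_def]; exact hij)
    · intro i j hij
      apply hdec
      · rw [Fin.lt_def]; exact hij
      · rw [Fin.le_def]; exact Nat.lt_succ_iff.mp j.isLt
  · -- increasing part: indices p..n-1, count n - p
    have hcount : n ≤ 2 * (n - (p : ℕ)) := by omega
    refine ⟨n - (p : ℕ), fun i => aa ⟨(p : ℕ) + i, by omega⟩, hcount, ?_, fun i => haaA _,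
      Or.inl ?_⟩
    · intro i j hij
      exact aa.strictMono (by rw [Fin.lt_def]; simpa using hij)
    · intro i j hij
      apply hinc
      · rw [Fin.le_def]; simp
      · rw [Fin.lt_def]; simpa using hij


/-- (Elekes–Nathanson–Ruzsa) There is an absolute constant c > 0 such that for
every strictly convex F : ℝ → ℝ and finite sets A, B, C of reals with
|A| = |B| = |C| = n, max(|A + B|, |F(A) + C|) ≥ c·n^{5/4}. -/
theorem convex_function_sumset_max :
    ∃ c : ℝ, 0 < c ∧
      ∀ (F : ℝ → ℝ), StrictConvexOn ℝ Set.univ F →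
        ∀ (n : ℕ) (A B C : Finset ℝ),
          A.card = n → B.card = n → C.card = n →
          max (((A + B).card : ℝ)) (((A.image F + C).card : ℝ))
            ≥ c * (n : ℝ) ^ ((5 : ℝ) / 4) := by
  classical
  refine ⟨1 / 64, by norm_num, ?_⟩
  intro F hF n A B C hA hB hC
  rcases Nat.eq_zero_or_pos n with rfl | hn
  · rw [Nat.cast_zero, Real.zero_rpow (by norm_num : (5:ℝ)/4 ≠ 0), mul_zero]
    exact le_max_of_le_left (Nat.cast_nonneg _)
  set s : ℕ := (A + B).card with hs
  set t : ℕ := (A.image F + C).card with ht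
  set M : ℕ := max s t with hM
  have hmax : max ((s : ℝ)) ((t : ℝ)) = (M : ℝ) := (Nat.cast_max ..).symm
  rw [ge_iff_le, hmax]
  have hns : n ≤ s := by
    rw [hs, ← hA]
    exact Finset.card_le_card_add_right (Finset.card_pos.mp (by omega))
  have hsM : s ≤ M := le_max_left _ _
  have htM : t ≤ M := le_max_right _ _
  rcases le_or_gt n (64 ^ 4) with hsmall | hbig
  · -- small case : M ≥ n ≥ (1/64) n^{5/4}
    have h14 : (n : ℝ) ^ ((1:ℝ)/4) ≤ 64 := by
      calc (n : ℝ) ^ ((1:ℝ)/4) ≤ ((64:ℝ) ^ (4:ℕ)) ^ ((1:ℝ)/4) := by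
            apply Real.rpow_le_rpow (Nat.cast_nonneg _) ?_ (by norm_num)
            rw [show ((64:ℝ) ^ (4:ℕ)) = ((64 ^ 4 : ℕ) : ℝ) by norm_num]
            exact_mod_cast hsmall
        _ = 64 := by
            rw [← Real.rpow_natCast (64:ℝ) 4, ← Real.rpow_mul (by norm_num)]
            norm_num
    have hsplit : (n : ℝ) ^ ((5:ℝ)/4) = (n : ℝ) * (n : ℝ) ^ ((1:ℝ)/4) := by
      rw [show (5:ℝ)/4 = 1 + 1/4 by norm_num,
        Real.rpow_add (by exact_mod_cast hn : (0:ℝ) < (n:ℝ)), Real.rpow_one]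
    rw [hsplit]
    have hnM : (n : ℝ) ≤ (M : ℝ) := by exact_mod_cast hns.trans hsM
    have hn0 : (0:ℝ) ≤ (n:ℝ) := Nat.cast_nonneg _
    nlinarith [Real.rpow_nonneg hn0 ((1:ℝ)/4)]
  · -- main case
    obtain ⟨m, e, hm2, he, heA, hmono⟩ := unimodal_split hF hn A hA
    obtain ⟨N, rfl⟩ : ∃ N, m = N + 1 := by
      refine ⟨m - 1, ?_⟩
      omega
    have hN : 0 < N := by omega
    have hkey : N ^ 3 * n ^ 2 ≤ 32 * s ^ 2 * t ^ 2 := by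
      rcases hmono with hmono | hanti
      · apply main_count hN e (F ∘ e) he hmono B C (A + B) (A.image F + C) hB hC rfl rfl
        · exact fun i b hb => Finset.add_mem_add (heA i) hb
        · exact fun i c hc => Finset.add_mem_add (Finset.mem_image_of_mem F (heA i)) hc
        · intro i j hdx hdy
          by_contra hij
          rcases Ne.lt_or_gt hij with h | h
          · have := chord_gap_lt hF (he (Fin.castSucc_lt_succ (i := i)))
              (he.le_iff_le.mpr (Fin.succ_le_castSucc_iff.mpr h)) (he (Fin.castSucc_lt_succ (i := j))) hdx
            simp only [Function.comp_apply] at hdy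
            linarith
          · have := chord_gap_lt hF (he (Fin.castSucc_lt_succ (i := j)))
              (he.le_iff_le.mpr (Fin.succ_le_castSucc_iff.mpr h)) (he (Fin.castSucc_lt_succ (i := i)))
              hdx.symm
            simp only [Function.comp_apply] at hdy
            linarith
      · have hS' : ((A.image F + C).image (fun z => -z)).card = t :=
          (Finset.card_image_of_injective _ neg_injective).trans rfl
        have hC' : (C.image (fun z => -z)).card = n :=
          (Finset.card_image_of_injective _ neg_injective).trans hC
        apply main_count hN e (fun i => -(F (e i))) he
          (fun i j hij => neg_lt_neg (hanti hij)) B (C.image (fun z => -z)) (A + B)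
          ((A.image F + C).image (fun z => -z)) hB hC' rfl hS'
        · exact fun i b hb => Finset.add_mem_add (heA i) hb
        · rintro i c' hc'
          rw [Finset.mem_image] at hc'
          obtain ⟨c, hc, rfl⟩ := hc'
          rw [Finset.mem_image]
          exact ⟨F (e i) + c,
            Finset.add_mem_add (Finset.mem_image_of_mem F (heA i)) hc, by ring⟩
        · intro i j hdx hdy
          by_contra hij
          rcases Ne.lt_or_gt hij with h | h
          · have := chord_gap_lt hF (he (Fin.castSucc_lt_succ (i := i)))
              (he.le_iff_le.mpr (Fin.succ_le_castSucc_iff.mpr h)) (he (Fin.castSucc_lt_succ (i := j))) hdx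
            linarith
          · have := chord_gap_lt hF (he (Fin.castSucc_lt_succ (i := j)))
              (he.le_iff_le.mpr (Fin.succ_le_castSucc_iff.mpr h)) (he (Fin.castSucc_lt_succ (i := i)))
              hdx.symm
            linarith
    -- numerics : n^5 ≤ (8M)^4
    have h4N : n ≤ 4 * N := by omega
    have hn5 : n ^ 5 ≤ (8 * M) ^ 4 := by
      calc n ^ 5 = n ^ 3 * n ^ 2 := by ring
        _ ≤ (4 * N) ^ 3 * n ^ 2 := Nat.mul_le_mul_right _ (Nat.pow_le_pow_left h4N 3)
        _ = 64 * (N ^ 3 * n ^ 2) := by ring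
        _ ≤ 64 * (32 * s ^ 2 * t ^ 2) := Nat.mul_le_mul_left _ hkey
        _ ≤ 64 * (32 * M ^ 2 * M ^ 2) := by
            have h1 : s ^ 2 ≤ M ^ 2 := Nat.pow_le_pow_left hsM 2
            have h2 : t ^ 2 ≤ M ^ 2 := Nat.pow_le_pow_left htM 2
            exact Nat.mul_le_mul_left _
              (Nat.mul_le_mul (Nat.mul_le_mul_left _ h1) h2)
        _ ≤ (8 * M) ^ 4 := by ring_nf; omega
    have hn5R : ((n:ℝ)) ^ (5:ℕ) ≤ ((8 * M : ℕ) : ℝ) ^ (4:ℕ) := by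
      exact_mod_cast hn5
    have h8M : (n : ℝ) ^ ((5:ℝ)/4) ≤ 8 * (M : ℝ) := by
      have h0n : (0:ℝ) ≤ (n:ℝ) := Nat.cast_nonneg _
      have h08M : (0:ℝ) ≤ ((8 * M : ℕ) : ℝ) := Nat.cast_nonneg _
      calc (n : ℝ) ^ ((5:ℝ)/4) = ((n:ℝ) ^ ((5:ℕ):ℝ)) ^ ((1:ℝ)/4) := by
            rw [← Real.rpow_mul h0n]
            norm_num
        _ ≤ (((8 * M : ℕ):ℝ) ^ ((4:ℕ):ℝ)) ^ ((1:ℝ)/4) := by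
            apply Real.rpow_le_rpow _ _ (by norm_num)
            · rw [Real.rpow_natCast]
              positivity
            · rw [Real.rpow_natCast, Real.rpow_natCast]
              exact hn5R
        _ = ((8 * M : ℕ) : ℝ) := by
            rw [← Real.rpow_mul h08M]
            norm_num
        _ = 8 * (M : ℝ) := by push_cast; ring
    have hM0 : (0:ℝ) ≤ (M:ℝ) := Nat.cast_nonneg _
    linarith
end

section
/- Let A = {a_1 < ... < a_k} have distinct consecutive differences and B have size ℓ. For any partition of C = A + B into t consecutive intervals C_1, ..., C_t (with respect to the ordering of C), the number of pairs {a_i + b, a_{i+1} + b} (1 ≤ i ≤ k-1, b ∈ B) contained entirely within a single block is at least ℓ·(k - t). -/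
open Pointwise

/-- If A has distinct consecutive differences, |B| = ℓ, and C = A + B is
partitioned into t consecutive intervals (encoded by f : ℝ → Fin t), then at
least ℓ·(k - t) of the pairs {a_i + b, a_{i+1} + b} lie within a single block. -/
theorem pairs_within_blocks_lower_bound
    (k ℓ t : ℕ) (a : ℕ → ℝ)
    (hmono : ∀ i j, i < j → j < k → a i < a j)
    (hdiff : ∀ i j, i + 1 < k → j + 1 < k →
      a (i + 1) - a i = a (j + 1) - a j → i = j)
    (B : Finset ℝ) (hB : B.card = ℓ)
    (f : ℝ → Fin t)
    (hinterval : ∀ c ∈ (Finset.image a (Finset.range k)) + B,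
      ∀ c' ∈ (Finset.image a (Finset.range k)) + B,
      ∀ c'' ∈ (Finset.image a (Finset.range k)) + B,
      c ≤ c' → c' ≤ c'' → f c = f c'' → f c' = f c) :
    ((((Finset.range (k - 1)) ×ˢ B).filter
        (fun p => f (a p.1 + p.2) = f (a (p.1 + 1) + p.2))).card : ℤ)
      ≥ (ℓ : ℤ) * ((k : ℤ) - t) := by
  rcases le_or_gt (k : ℤ) (t : ℤ) with hkt | hkt
  · have h1 : (ℓ : ℤ) * ((k : ℤ) - t) ≤ 0 :=
      mul_nonpos_of_nonneg_of_nonpos (by positivity) (by omega)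
    exact le_trans h1 (by positivity)
  · have ht : 1 ≤ t := by
      by_contra h
      have ht0 : t = 0 := by omega
      subst ht0
      exact absurd (f 0).isLt (Nat.not_lt_zero _)
    have hk2 : 2 ≤ k := by omega
    -- membership
    have hmem : ∀ b ∈ B, ∀ i, i < k →
        a i + b ∈ (Finset.image a (Finset.range k)) + B := by
      intro b hb i hi
      exact Finset.add_mem_add (Finset.mem_image_of_mem a (Finset.mem_range.mpr hi)) hb
    have hle : ∀ m n, m ≤ n → n < k → a m ≤ a n := by
      intro m n hmn hn
      rcases eq_or_lt_of_le hmn with h | h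
      · exact le_of_eq (by rw [h])
      · exact le_of_lt (hmono m n h hn)
    -- key per-b bound
    have key : ∀ b ∈ B, (k : ℤ) - t ≤
        (((Finset.range (k - 1)).filter
          (fun i => f (a i + b) = f (a (i + 1) + b))).card : ℤ) := by
      intro b hb
      set D := (Finset.range (k - 1)).filter
          (fun i => ¬ f (a i + b) = f (a (i + 1) + b)) with hD
      have hsplit : ((Finset.range (k - 1)).filter
            (fun i => f (a i + b) = f (a (i + 1) + b))).card + D.card = k - 1 := by
        rw [hD, Finset.card_filter_add_card_filter_not, Finset.card_range]
      have hDle : D.card ≤ t - 1 := by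
        have : D.card ≤ ((Finset.univ : Finset (Fin t)).erase (f (a (k - 1) + b))).card := by
          apply Finset.card_le_card_of_injOn (fun i => f (a i + b))
          · intro i hi
            rw [hD, Finset.mem_coe, Finset.mem_filter, Finset.mem_range] at hi
            obtain ⟨hik, hne⟩ := hi
            rw [Finset.mem_coe]
            apply Finset.mem_erase.mpr
            refine ⟨?_, Finset.mem_univ _⟩
            intro heq
            exact hne (hinterval (a i + b) (hmem b hb i (by omega))
              (a (i + 1) + b) (hmem b hb (i + 1) (by omega))
              (a (k - 1) + b) (hmem b hb (k - 1) (by omega))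
              (by have := hmono i (i + 1) (by omega) (by omega); linarith)
              (by have := hle (i + 1) (k - 1) (by omega) (by omega); linarith)
              heq).symm
          · intro i hi j hj hij
            rw [Finset.mem_coe, hD, Finset.mem_filter, Finset.mem_range] at hi hj
            by_contra hne
            rcases lt_or_gt_of_ne hne with h | h
            · exact hi.2 (hinterval (a i + b) (hmem b hb i (by omega))
                (a (i + 1) + b) (hmem b hb (i + 1) (by omega))
                (a j + b) (hmem b hb j (by omega))
                (by have := hmono i (i + 1) (by omega) (by omega); linarith)
                (by have := hle (i + 1) j (by omega) (by omega); linarith)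
                hij).symm
            · exact hj.2 (hinterval (a j + b) (hmem b hb j (by omega))
                (a (j + 1) + b) (hmem b hb (j + 1) (by omega))
                (a i + b) (hmem b hb i (by omega))
                (by have := hmono j (j + 1) (by omega) (by omega); linarith)
                (by have := hle (j + 1) i (by omega) (by omega); linarith)
                hij.symm).symm
        rwa [Finset.card_erase_of_mem (Finset.mem_univ _), Finset.card_univ,
          Fintype.card_fin] at this
      omega
    -- sum over B
    have hcard : ((((Finset.range (k - 1)) ×ˢ B).filter
        (fun p => f (a p.1 + p.2) = f (a (p.1 + 1) + p.2))).card : ℤ)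
        = ∑ b ∈ B, (((Finset.range (k - 1)).filter
            (fun i => f (a i + b) = f (a (i + 1) + b))).card : ℤ) := by
      have hN : (((Finset.range (k - 1)) ×ˢ B).filter
          (fun p => f (a p.1 + p.2) = f (a (p.1 + 1) + p.2))).card
          = ∑ b ∈ B, ((Finset.range (k - 1)).filter
              (fun i => f (a i + b) = f (a (i + 1) + b))).card := by
        rw [Finset.card_filter, Finset.sum_product, Finset.sum_comm]
        exact Finset.sum_congr rfl fun b _ => (Finset.card_filter _ _).symm
      rw [hN]
      push_cast
      rfl
    rw [ge_iff_le, hcard]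
    calc (ℓ : ℤ) * ((k : ℤ) - t) = ∑ _b ∈ B, ((k : ℤ) - t) := by
          rw [Finset.sum_const, hB, nsmul_eq_mul]
      _ ≤ _ := Finset.sum_le_sum key
end

section
/- Let A = {a_1 < ... < a_k} have distinct consecutive differences and |B| = ℓ. For any partition of C = A + B into t consecutive intervals C_1, ..., C_t, one has ∑_{u=1}^t C(|C_u|, 2) ≥ ℓ·(k - t). -/
open Pointwise

/-- If A has distinct consecutive differences and |B| = ℓ, then for any
partition of C = A + B into t consecutive intervals C_u (encoded by
f : ℝ → Fin t), one has ∑_u C(|C_u|, 2) ≥ ℓ·(k - t). -/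
theorem sum_choose_two_lower_bound
    (k ℓ t : ℕ) (a : ℕ → ℝ)
    (hmono : ∀ i j, i < j → j < k → a i < a j)
    (hdiff : ∀ i j, i + 1 < k → j + 1 < k →
      a (i + 1) - a i = a (j + 1) - a j → i = j)
    (B : Finset ℝ) (hB : B.card = ℓ)
    (f : ℝ → Fin t)
    (hinterval : ∀ c ∈ (Finset.image a (Finset.range k)) + B,
      ∀ c' ∈ (Finset.image a (Finset.range k)) + B,
      ∀ c'' ∈ (Finset.image a (Finset.range k)) + B,
      c ≤ c' → c' ≤ c'' → f c = f c'' → f c' = f c) :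
    (∑ u : Fin t,
        Nat.choose ((((Finset.image a (Finset.range k)) + B).filter
          (fun x => f x = u)).card) 2 : ℤ)
      ≥ (ℓ : ℤ) * ((k : ℤ) - t) := by
  set C : Finset ℝ := (Finset.image a (Finset.range k)) + B with hC
  -- trivial case k ≤ t
  by_cases htk : k ≤ t
  · have h1 : (ℓ : ℤ) * ((k : ℤ) - t) ≤ 0 := by
      apply mul_nonpos_of_nonneg_of_nonpos
      · positivity
      · have : (k : ℤ) ≤ t := by exact_mod_cast htk
        linarith
    have h2 : (0 : ℤ) ≤ ∑ u : Fin t,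
        (Nat.choose ((C.filter (fun x => f x = u)).card) 2 : ℤ) := by
      positivity
    calc (ℓ : ℤ) * ((k : ℤ) - t) ≤ 0 := h1
      _ ≤ _ := h2
  push_neg at htk
  have ht : 0 < t := Fin.pos_iff_nonempty.mpr ⟨f 0⟩
  -- membership of a i + b in C
  have hmemC : ∀ i, i < k → ∀ b ∈ B, a i + b ∈ C := fun i hi b hb =>
    Finset.add_mem_add (Finset.mem_image_of_mem a (Finset.mem_range.mpr hi)) hb
  have hmono' : ∀ m n, m ≤ n → n < k → a m ≤ a n := by
    intro m n hmn hn
    rcases eq_or_lt_of_le hmn with h | h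
    · rw [h]
    · exact (hmono m n h hn).le
  -- for each b, the set of "good" indices
  set good : ℝ → Finset ℕ := fun b =>
    (Finset.range (k-1)).filter (fun i => f (a i + b) = f (a (i+1) + b)) with hgood
  -- lower bound on card of good b
  have hgoodcard : ∀ b ∈ B, k - t ≤ (good b).card := by
    intro b hb
    set bad : Finset ℕ :=
      (Finset.range (k-1)).filter (fun i => ¬ f (a i + b) = f (a (i+1) + b)) with hbad
    have hsplit : (good b).card + bad.card = k - 1 := by
      rw [hgood, hbad]
      simpa using Finset.card_filter_add_card_filter_not
        (s := Finset.range (k-1)) (p := fun i => f (a i + b) = f (a (i+1) + b))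
    have hbadcard : bad.card ≤ t - 1 := by
      have hinj : Set.InjOn (fun i => f (a (i+1) + b)) bad := by
        intro i hi j hj hij
        simp only [Finset.mem_coe, hbad, Finset.mem_filter, Finset.mem_range] at hi hj
        simp only [] at hij
        by_contra hne
        rcases lt_or_gt_of_ne hne with h | h
        · -- i < j : show f (a j + b) = f (a (i+1) + b), contradicting j bad
          have h1 : a (i+1) + b ≤ a j + b := by
            have := hmono' (i+1) j h (by omega)
            linarith
          have h2 : a j + b ≤ a (j+1) + b := by
            have := hmono' j (j+1) (by omega) (by omega)
            linarith
          have := hinterval _ (hmemC (i+1) (by omega) b hb)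
            _ (hmemC j (by omega) b hb)
            _ (hmemC (j+1) (by omega) b hb) h1 h2 hij
          exact hj.2 (this.trans hij)
        · have h1 : a (j+1) + b ≤ a i + b := by
            have := hmono' (j+1) i h (by omega)
            linarith
          have h2 : a i + b ≤ a (i+1) + b := by
            have := hmono' i (i+1) (by omega) (by omega)
            linarith
          have := hinterval _ (hmemC (j+1) (by omega) b hb)
            _ (hmemC i (by omega) b hb)
            _ (hmemC (i+1) (by omega) b hb) h1 h2 hij.symm
          exact hi.2 (this.trans hij.symm)
      have hmaps : ∀ i ∈ bad, f (a (i+1) + b) ∈ (Finset.univ.erase (f (a 0 + b))) := by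
        intro i hi
        simp only [hbad, Finset.mem_filter, Finset.mem_range] at hi
        rw [Finset.mem_erase]
        refine ⟨?_, Finset.mem_univ _⟩
        intro heq
        have h1 : a 0 + b ≤ a i + b := by
          have := hmono' 0 i (by omega) (by omega)
          linarith
        have h2 : a i + b ≤ a (i+1) + b := by
          have := hmono' i (i+1) (by omega) (by omega)
          linarith
        have := hinterval _ (hmemC 0 (by omega) b hb)
          _ (hmemC i (by omega) b hb)
          _ (hmemC (i+1) (by omega) b hb) h1 h2 heq.symm
        exact hi.2 (by rw [this, heq])
      calc bad.card ≤ (Finset.univ.erase (f (a 0 + b))).card :=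
            Finset.card_le_card_of_injOn _ hmaps hinj
        _ = t - 1 := by rw [Finset.card_erase_of_mem (Finset.mem_univ _)]; simp
    omega
  -- the set of (b, i) pairs
  set S : Finset (ℝ × ℕ) :=
    B.biUnion (fun b => (good b).image (fun i => (b, i))) with hS
  have hScard : ℓ * (k - t) ≤ S.card := by
    rw [hS, Finset.card_biUnion]
    · calc ℓ * (k - t) = ∑ _b ∈ B, (k - t) := by
            rw [Finset.sum_const, hB, smul_eq_mul]
        _ ≤ ∑ b ∈ B, ((good b).image (fun i => (b, i))).card := by
            apply Finset.sum_le_sum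
            intro b hb
            rw [Finset.card_image_of_injective _ (fun x y h => by
              simpa using congrArg Prod.snd h)]
            exact hgoodcard b hb
    · intro b hb b' hb' hne
      simp only [Finset.disjoint_left, Finset.mem_image]
      rintro p ⟨i, _, rfl⟩ ⟨j, _, hj⟩
      exact hne (congrArg Prod.fst hj).symm
  -- the target set of 2-element subsets
  set T : Finset (Finset ℝ) :=
    Finset.univ.biUnion (fun u : Fin t =>
      Finset.powersetCard 2 (C.filter (fun x => f x = u))) with hT
  have hTcard : T.card = ∑ u : Fin t, Nat.choose ((C.filter (fun x => f x = u)).card) 2 := by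
    rw [hT, Finset.card_biUnion]
    · exact Finset.sum_congr rfl (fun u _ => Finset.card_powersetCard 2 _)
    · intro u _ v _ huv
      simp only [Finset.disjoint_left]
      intro s hsu hsv
      rw [Finset.mem_powersetCard] at hsu hsv
      have hne : s.Nonempty := Finset.card_pos.mp (by omega)
      obtain ⟨x, hx⟩ := hne
      have h1 := (Finset.mem_filter.mp (hsu.1 hx)).2
      have h2 := (Finset.mem_filter.mp (hsv.1 hx)).2
      exact huv (h1 ▸ h2 ▸ rfl)
  -- the injection from S to T
  have hmemS : ∀ p ∈ S, p.1 ∈ B ∧ p.2 + 1 < k ∧ f (a p.2 + p.1) = f (a (p.2+1) + p.1) := by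
    intro p hp
    rw [hS, Finset.mem_biUnion] at hp
    obtain ⟨b, hb, hp⟩ := hp
    rw [Finset.mem_image] at hp
    obtain ⟨i, hi, rfl⟩ := hp
    rw [hgood, Finset.mem_filter, Finset.mem_range] at hi
    exact ⟨hb, by omega, hi.2⟩
  have hinjcard : S.card ≤ T.card := by
    apply Finset.card_le_card_of_injOn (fun p => ({a p.2 + p.1, a (p.2+1) + p.1} : Finset ℝ))
    · intro p hp
      obtain ⟨hb, hik, hf⟩ := hmemS p hp
      rw [Finset.mem_coe, Finset.mem_biUnion]
      refine ⟨f (a p.2 + p.1), Finset.mem_univ _, ?_⟩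
      rw [Finset.mem_powersetCard]
      constructor
      · intro x hx
        rw [Finset.mem_insert, Finset.mem_singleton] at hx
        rcases hx with rfl | rfl
        · exact Finset.mem_filter.mpr ⟨hmemC p.2 (by omega) p.1 hb, rfl⟩
        · exact Finset.mem_filter.mpr ⟨hmemC (p.2+1) (by omega) p.1 hb, hf.symm⟩
      · rw [Finset.card_insert_of_notMem, Finset.card_singleton]
        rw [Finset.mem_singleton]
        have := hmono p.2 (p.2+1) (by omega) (by omega)
        intro h; linarith
    · intro p hp q hq heq
      obtain ⟨hbp, hikp, _⟩ := hmemS p hp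
      obtain ⟨hbq, hikq, _⟩ := hmemS q hq
      have hp12 : a p.2 + p.1 < a (p.2+1) + p.1 := by
        have := hmono p.2 (p.2+1) (by omega) (by omega); linarith
      have hq12 : a q.2 + q.1 < a (q.2+1) + q.1 := by
        have := hmono q.2 (q.2+1) (by omega) (by omega); linarith
      simp only [] at heq
      -- from equality of pairs deduce componentwise equality
      have hx : a p.2 + p.1 ∈ ({a q.2 + q.1, a (q.2+1) + q.1} : Finset ℝ) := by
        rw [← heq]; simp
      have hy : a (p.2+1) + p.1 ∈ ({a q.2 + q.1, a (q.2+1) + q.1} : Finset ℝ) := by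
        rw [← heq]; simp
      rw [Finset.mem_insert, Finset.mem_singleton] at hx hy
      have hxeq : a p.2 + p.1 = a q.2 + q.1 ∧ a (p.2+1) + p.1 = a (q.2+1) + q.1 := by
        rcases hx with hx | hx <;> rcases hy with hy | hy
        · exfalso; rw [hx, hy] at hp12; linarith
        · exact ⟨hx, hy⟩
        · exfalso; rw [hx] at hp12; rw [hy] at hp12; linarith
        · exfalso; rw [hx, hy] at hp12; linarith
      obtain ⟨h1, h2⟩ := hxeq
      have hdd : a (p.2+1) - a p.2 = a (q.2+1) - a q.2 := by linarith
      have hii : p.2 = q.2 := hdiff _ _ hikp hikq hdd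
      have hbb : p.1 = q.1 := by rw [hii] at h1; linarith
      exact Prod.ext hbb hii
  -- combine
  have hfinal : ℓ * (k - t) ≤ ∑ u : Fin t, Nat.choose ((C.filter (fun x => f x = u)).card) 2 := by
    rw [← hTcard]
    exact hScard.trans hinjcard
  have hcast : ((ℓ * (k - t) : ℕ) : ℤ) = (ℓ : ℤ) * ((k : ℤ) - t) := by
    push_cast [Nat.cast_sub htk.le]
    ring
  calc (ℓ : ℤ) * ((k : ℤ) - t) = ((ℓ * (k - t) : ℕ) : ℤ) := hcast.symm
    _ ≤ _ := by exact_mod_cast hfinal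
end
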